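/- arXiv:2105.05106 — 10 statements merged into one kernel-verified Lean document; each statement's English description precedes it below -/
import Mathlib

section
/- (Main derivative identity, Theorem 1.) Let μ, f(y|x), f_Y, and the posterior expectation be as in the context, and let g : ℝ^d → ℝ^m be measurable (g(x) represents E[U|X=x] for a random vector U such that U ↔ X ↔ Y is a Markov chain, so that E[U|Y=y] = E[g(X)|Y=y]). Assume that for every y ∈ 𝒴 there exist a neighborhood N of y and a μ-integrable ψ with (1 + ‖g(x)‖)(f(y'|x) + ‖∇_{y'} f(y'|x)‖) ≤ ψ(x) for all y' ∈ N and all x. Then the map F(y) := E[g(X)|Y=y] is differentiable on 𝒴 and for every y ∈ 𝒴, every i ∈ {1,…,m} and j ∈ {1,…,k}: ∂F_i/∂y_j (y) = Cov( ρ_j(y|X), g_i(X) | Y = y ), where ρ_j(y|x) = ∂/∂y_j log f(y|x); equivalently, the Jacobian of y ↦ E[U|Y=y] equals the posterior cross-covariance of the conditional score and g(X). -/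
open MeasureTheory

open Filter Metric Topology in
/-- Strong measurability of the parametric derivative at a point of an open set,
obtained as a pointwise limit of difference quotients. -/
lemma aux_meas_fderiv {d k : ℕ} {𝒴 : Set (Fin k → ℝ)} (h𝒴 : IsOpen 𝒴)
    {f : (Fin k → ℝ) → (Fin d → ℝ) → ℝ}
    {f' : (Fin k → ℝ) → (Fin d → ℝ) → ((Fin k → ℝ) →L[ℝ] ℝ)}
    (hfmeas : ∀ y ∈ 𝒴, Measurable (fun x => f y x))
    (hfdiff : ∀ x, ∀ y ∈ 𝒴, HasFDerivAt (fun y' => f y' x) (f' y x) y)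
    {y : Fin k → ℝ} (hy : y ∈ 𝒴) :
    StronglyMeasurable (fun x => f' y x) := by
  obtain ⟨ε, εpos, hball⟩ := Metric.isOpen_iff.1 h𝒴 y hy
  have key : ∀ v : Fin k → ℝ, Measurable (fun x => f' y x v) := by
    intro v
    set t : ℕ → ℝ := fun n => ε / (((n : ℝ) + 1) * (‖v‖ + 1)) with ht
    have hvpos : (0:ℝ) < ‖v‖ + 1 := by positivity
    have htpos : ∀ n, 0 < t n := by
      intro n
      apply div_pos εpos
      positivity
    have hmem : ∀ n : ℕ, y + t n • v ∈ 𝒴 := by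
      intro n
      apply hball
      rw [mem_ball, dist_eq_norm]
      have h1 : y + t n • v - y = t n • v := by abel
      rw [h1, norm_smul, Real.norm_eq_abs, abs_of_pos (htpos n), ht]
      rw [div_mul_eq_mul_div, div_lt_iff₀ (by positivity)]
      have hn : (0:ℝ) ≤ (n:ℝ) := Nat.cast_nonneg n
      have h2 : ‖v‖ < ((n:ℝ) + 1) * (‖v‖ + 1) := by nlinarith [norm_nonneg v]
      exact mul_lt_mul_of_pos_left h2 εpos
    have ht0 : Tendsto t atTop (𝓝[≠] (0:ℝ)) := by
      rw [tendsto_nhdsWithin_iff]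
      constructor
      · have h1 : Tendsto (fun n : ℕ => (ε / (‖v‖ + 1)) / ((n:ℝ) + 1)) atTop (𝓝 0) := by
          have h0 := (tendsto_const_div_atTop_nhds_zero_nat (ε / (‖v‖ + 1))).comp
            (tendsto_add_atTop_nat 1)
          have heq0 : (fun n : ℕ => (ε / (‖v‖ + 1)) / ((n:ℝ) + 1))
              = (fun n : ℕ => (ε / (‖v‖ + 1)) / (n:ℝ)) ∘ (fun a => a + 1) := by
            funext n
            simp [Function.comp]
          rw [heq0]
          exact h0
        have heq : t = fun n : ℕ => (ε / (‖v‖ + 1)) / ((n:ℝ) + 1) := by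
          funext n
          rw [ht, div_div, mul_comm]
        rw [heq]
        exact h1
      · exact Eventually.of_forall fun n => (htpos n).ne'
    have hlim : ∀ x, Tendsto (fun n => (f (y + t n • v) x - f y x) / t n) atTop
        (𝓝 (f' y x v)) := by
      intro x
      have h1 : HasDerivAt (fun s : ℝ => y + s • v) v (0:ℝ) := by
        simpa using ((hasDerivAt_id (0:ℝ)).smul_const v).const_add y
      have hcurve : HasDerivAt (fun s : ℝ => f (y + s • v) x) (f' y x v) 0 := by
        have h2 : HasFDerivAt (fun y' => f y' x) (f' y x) (y + (0:ℝ) • v) := by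
          simpa using hfdiff x y hy
        have h3 := h2.comp_hasDerivAt (f := fun s : ℝ => y + s • v) 0 h1
        exact h3
      have h3 := (hasDerivAt_iff_tendsto_slope.1 hcurve).comp ht0
      have h4 : ((slope (fun s : ℝ => f (y + s • v) x) 0) ∘ t)
          = fun n => (f (y + t n • v) x - f y x) / t n := by
        funext n
        simp [Function.comp, slope_def_field, div_eq_mul_inv, mul_comm]
      rwa [h4] at h3
    exact measurable_of_tendsto_metrizable
      (fun n => ((hfmeas _ (hmem n)).sub (hfmeas y hy)).div_const _)
      (tendsto_pi_nhds.2 hlim)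
  -- reassemble the continuous linear map from its coordinates
  have hrepr : (fun x => f' y x) = fun x =>
      ∑ j : Fin k, (f' y x (Pi.single j 1)) • (ContinuousLinearMap.proj j :
        (Fin k → ℝ) →L[ℝ] ℝ) := by
    funext x
    ext w
    simp only [ContinuousLinearMap.coe_sum', Finset.sum_apply,
      ContinuousLinearMap.coe_smul', Pi.smul_apply, ContinuousLinearMap.proj_apply,
      smul_eq_mul]
    have hw : w = ∑ j : Fin k, w j • (Pi.single j (1:ℝ) : Fin k → ℝ) := by
      funext i
      simp [Pi.single_apply, Finset.sum_apply]
    conv_lhs => rw [hw]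
    rw [map_sum]
    congr 1
    funext j
    rw [ContinuousLinearMap.map_smul]
    simp [mul_comm]
  rw [hrepr]
  refine Finset.stronglyMeasurable_fun_sum _ fun j _ => ?_
  exact ((key (Pi.single j 1)).stronglyMeasurable).smul_const _

/-- Main derivative identity (Theorem 1): the Jacobian of `y ↦ E[U|Y=y]`
equals the posterior cross-covariance of the conditional score and `g(X)`. -/
theorem stmt_1
    {d k m : ℕ}
    (μ : Measure (Fin d → ℝ)) [IsProbabilityMeasure μ]
    (𝒴 : Set (Fin k → ℝ)) (h𝒴 : IsOpen 𝒴)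
    (f : (Fin k → ℝ) → (Fin d → ℝ) → ℝ)
    (f' : (Fin k → ℝ) → (Fin d → ℝ) → ((Fin k → ℝ) →L[ℝ] ℝ))
    (hfpos : ∀ y ∈ 𝒴, ∀ x, 0 < f y x)
    (hfmeas : ∀ y ∈ 𝒴, Measurable (fun x => f y x))
    (hfdiff : ∀ x, ∀ y ∈ 𝒴, HasFDerivAt (fun y' => f y' x) (f' y x) y)
    (fY : (Fin k → ℝ) → ℝ)
    (hfY : ∀ y, fY y = ∫ x, f y x ∂μ)
    (hfYpos : ∀ y ∈ 𝒴, 0 < fY y)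
    (hfYfin : ∀ y ∈ 𝒴, Integrable (fun x => f y x) μ)
    (g : (Fin d → ℝ) → (Fin m → ℝ)) (hg : Measurable g)
    (F : (Fin k → ℝ) → (Fin m → ℝ))
    (hF : ∀ y i, F y i = (∫ x, g x i * f y x ∂μ) / fY y)
    (hdom : ∀ y ∈ 𝒴, ∃ N ∈ nhds y, ∃ ψ : (Fin d → ℝ) → ℝ, Integrable ψ μ ∧
      ∀ y' ∈ N, ∀ x, (1 + ‖g x‖) * (f y' x + ‖f' y' x‖) ≤ ψ x) :
    ∀ y ∈ 𝒴,
      DifferentiableAt ℝ F y ∧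
      ∀ (i : Fin m) (j : Fin k),
        fderiv ℝ F y (Pi.single j 1) i =
          (∫ x, (f' y x (Pi.single j 1) / f y x) * g x i * f y x ∂μ) / fY y
            - ((∫ x, (f' y x (Pi.single j 1) / f y x) * f y x ∂μ) / fY y)
              * ((∫ x, g x i * f y x ∂μ) / fY y) := by
  intro y hy
  classical
  obtain ⟨N, hN, ψ, hψint, hψ⟩ := hdom y hy
  have hN𝒴 : N ∩ 𝒴 ∈ nhds y := Filter.inter_mem hN (h𝒴.mem_nhds hy)
  obtain ⟨ε, εpos, hball⟩ := Metric.mem_nhds_iff.1 hN𝒴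
  -- basic facts about points in the ball
  have hball𝒴 : ∀ y' ∈ Metric.ball y ε, y' ∈ 𝒴 := fun y' h => (hball h).2
  have hballN : ∀ y' ∈ Metric.ball y ε, y' ∈ N := fun y' h => (hball h).1
  have hy𝒴ball : y ∈ Metric.ball y ε := Metric.mem_ball_self εpos
  -- bounds
  have hbound_f' : ∀ y' ∈ Metric.ball y ε, ∀ x, ‖f' y' x‖ ≤ ψ x := by
    intro y' hy' x
    have h1 := hψ y' (hballN y' hy') x
    have h2 : (0:ℝ) < f y' x := hfpos y' (hball𝒴 y' hy') x
    nlinarith [norm_nonneg (g x), norm_nonneg (f' y' x)]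
  have hbound_gf' : ∀ (i : Fin m), ∀ y' ∈ Metric.ball y ε, ∀ x,
      ‖g x i • f' y' x‖ ≤ ψ x := by
    intro i y' hy' x
    have h1 := hψ y' (hballN y' hy') x
    have h2 : (0:ℝ) < f y' x := hfpos y' (hball𝒴 y' hy') x
    have h3 : |g x i| ≤ ‖g x‖ := by
      simpa [Real.norm_eq_abs] using norm_le_pi_norm (g x) i
    refine le_trans (ContinuousLinearMap.opNorm_smul_le _ _) ?_
    rw [Real.norm_eq_abs]
    nlinarith [norm_nonneg (g x), norm_nonneg (f' y' x), abs_nonneg (g x i)]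
  have hbound_gf : ∀ (i : Fin m), ∀ x, ‖g x i * f y x‖ ≤ ψ x := by
    intro i x
    have h1 := hψ y (hballN y hy𝒴ball) x
    have h2 : (0:ℝ) < f y x := hfpos y hy x
    have h3 : |g x i| ≤ ‖g x‖ := by
      simpa [Real.norm_eq_abs] using norm_le_pi_norm (g x) i
    rw [Real.norm_eq_abs, abs_mul, abs_of_pos h2]
    nlinarith [norm_nonneg (g x), norm_nonneg (f' y x), abs_nonneg (g x i)]
  -- measurability of the derivative
  have hf'sm : StronglyMeasurable (fun x => f' y x) :=
    aux_meas_fderiv h𝒴 hfmeas hfdiff hy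
  have hgi_meas : ∀ i : Fin m, Measurable fun x => g x i :=
    fun i => (measurable_pi_apply i).comp hg
  -- integrability facts
  have hint_f' : Integrable (fun x => f' y x) μ := by
    refine Integrable.mono' hψint hf'sm.aestronglyMeasurable ?_
    exact Filter.Eventually.of_forall fun x => hbound_f' y hy𝒴ball x
  have hint_gf' : ∀ i : Fin m, Integrable (fun x => g x i • f' y x) μ := by
    intro i
    refine Integrable.mono' hψint
      (((hgi_meas i).stronglyMeasurable.aestronglyMeasurable).smul
        hf'sm.aestronglyMeasurable) ?_
    exact Filter.Eventually.of_forall fun x => hbound_gf' i y hy𝒴ball x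
  have hint_gf : ∀ i : Fin m, Integrable (fun x => g x i * f y x) μ := by
    intro i
    refine Integrable.mono' hψint
      (((hgi_meas i).mul (hfmeas y hy)).aestronglyMeasurable) ?_
    exact Filter.Eventually.of_forall fun x => hbound_gf i x
  -- derivative of the numerator (per coordinate)
  have hG : ∀ i : Fin m, HasFDerivAt (fun y' => ∫ x, g x i * f y' x ∂μ)
      (∫ x, g x i • f' y x ∂μ) y := by
    intro i
    apply hasFDerivAt_integral_of_dominated_of_fderiv_le
      (F := fun y' x => g x i * f y' x) (F' := fun y' x => g x i • f' y' x)
      (bound := ψ) (Metric.ball_mem_nhds y εpos)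
    · filter_upwards [hN𝒴] with y' hy'
      exact ((hgi_meas i).mul (hfmeas y' hy'.2)).aestronglyMeasurable
    · exact hint_gf i
    · exact (((hgi_meas i).stronglyMeasurable.aestronglyMeasurable).smul
        hf'sm.aestronglyMeasurable)
    · exact Filter.Eventually.of_forall fun x y' hy' => hbound_gf' i y' hy' x
    · exact hψint
    · refine Filter.Eventually.of_forall fun x y' hy' => ?_
      exact (hfdiff x y' (hball𝒴 y' hy')).const_mul (g x i)
  -- derivative of the denominator
  have hfYfun : fY = fun y' => ∫ x, f y' x ∂μ := funext hfY
  have hfYd : HasFDerivAt fY (∫ x, f' y x ∂μ) y := by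
    rw [hfYfun]
    apply hasFDerivAt_integral_of_dominated_of_fderiv_le
      (F := fun y' x => f y' x) (F' := fun y' x => f' y' x) (bound := ψ) (Metric.ball_mem_nhds y εpos)
    · filter_upwards [hN𝒴] with y' hy'
      exact (hfmeas y' hy'.2).aestronglyMeasurable
    · exact hfYfin y hy
    · exact hf'sm.aestronglyMeasurable
    · exact Filter.Eventually.of_forall fun x y' hy' => hbound_f' y' hy' x
    · exact hψint
    · exact Filter.Eventually.of_forall fun x y' hy' => hfdiff x y' (hball𝒴 y' hy')
  have hfYne : fY y ≠ 0 := (hfYpos y hy).ne'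
  -- derivative of the inverse of the denominator
  have hinv : HasFDerivAt (fun y' => (fY y')⁻¹)
      ((-(fY y ^ 2)⁻¹) • (∫ x, f' y x ∂μ)) y := by
    have h1 := (hasDerivAt_inv hfYne).comp_hasFDerivAt y hfYd
    exact h1
  -- per-coordinate derivative of F
  set Gd : Fin m → ((Fin k → ℝ) →L[ℝ] ℝ) := fun i => ∫ x, g x i • f' y x ∂μ with hGd
  set Yd : (Fin k → ℝ) →L[ℝ] ℝ := ∫ x, f' y x ∂μ with hYd
  set D : Fin m → ((Fin k → ℝ) →L[ℝ] ℝ) := fun i =>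
    (∫ x, g x i * f y x ∂μ) • ((-(fY y ^ 2)⁻¹) • Yd) + (fY y)⁻¹ • Gd i with hD
  have hFrepr : F = fun y' i => (∫ x, g x i * f y' x ∂μ) / fY y' :=
    funext fun y' => funext fun i => hF y' i
  have hFd : HasFDerivAt F (ContinuousLinearMap.pi D) y := by
    rw [hFrepr]
    apply hasFDerivAt_pi.2
    intro i
    have h1 : HasFDerivAt (fun y' => (∫ x, g x i * f y' x ∂μ) * (fY y')⁻¹) (D i) y :=
      (hG i).mul hinv
    have h2 : (fun y' => (∫ x, g x i * f y' x ∂μ) * (fY y')⁻¹)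
        = fun y' => (∫ x, g x i * f y' x ∂μ) / fY y' := by
      funext y'
      rw [div_eq_mul_inv]
    rwa [h2] at h1
  refine ⟨hFd.differentiableAt, ?_⟩
  intro i j
  rw [hFd.fderiv]
  set v : Fin k → ℝ := Pi.single j 1 with hv
  -- evaluate the LHS
  have hGdv : Gd i v = ∫ x, g x i * f' y x v ∂μ := by
    rw [hGd, ContinuousLinearMap.integral_apply (hint_gf' i)]
    congr 1
  have hYdv : Yd v = ∫ x, f' y x v ∂μ := by
    rw [hYd, ContinuousLinearMap.integral_apply hint_f']
  have hLHS : (ContinuousLinearMap.pi D) v i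
      = (∫ x, g x i * f y x ∂μ) * ((-(fY y ^ 2)⁻¹) * (∫ x, f' y x v ∂μ))
        + (fY y)⁻¹ * (∫ x, g x i * f' y x v ∂μ) := by
    rw [ContinuousLinearMap.pi_apply, hD]
    simp only [ContinuousLinearMap.add_apply, ContinuousLinearMap.smul_apply,
      smul_eq_mul]
    rw [hGdv, hYdv]
  rw [hLHS]
  -- simplify the RHS integrands
  have hint1 : (∫ x, (f' y x v / f y x) * g x i * f y x ∂μ)
      = ∫ x, g x i * f' y x v ∂μ := by
    congr 1
    funext x
    have := (hfpos y hy x).ne'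
    field_simp
  have hint2 : (∫ x, (f' y x v / f y x) * f y x ∂μ) = ∫ x, f' y x v ∂μ := by
    congr 1
    funext x
    have := (hfpos y hy x).ne'
    field_simp
  rw [hint1, hint2]
  field_simp
  ring
end

section
/- (Exponential-family derivative identity, Theorem 2.) In the exponential-family setup of the context, let g : ℝ^d → ℝ^m be measurable (g(x) represents E[U|X=x] for a Markov chain U ↔ X ↔ Y). Assume that for every y ∈ 𝒴 there exist a neighborhood N of y and a μ-integrable ψ with (1 + ‖g(x)‖)(1 + ‖x‖) exp(⟨x, T(y')⟩ − φ(x)) ≤ ψ(x) for all y' ∈ N and all x. Then F(y) := E[g(X)|Y=y] is differentiable on 𝒴 and for every y ∈ 𝒴, i ∈ {1,…,m}, j ∈ {1,…,k}: ∂F_i/∂y_j (y) = Σ_{l=1}^d (∂T_l/∂y_j)(y) · Cov( X_l, g_i(X) | Y = y ); in matrix form, J_y E[U|Y=y] = (J_y T(y)) · Cov(X, U | Y=y), where (J_y T(y))_{j,l} = ∂T_l/∂y_j. -/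
set_option maxHeartbeats 1000000
open MeasureTheory Asymptotics Filter

private lemma exp_taylor_bound (s : ℝ) : |Real.exp s - 1 - s| ≤ |s| * (Real.exp s + 1) := by
  have h2 : Real.exp (-s) * Real.exp s = 1 := by rw [← Real.exp_add]; simp
  rcases le_or_gt 0 s with hs | hs
  · rw [abs_of_nonneg (by nlinarith [Real.add_one_le_exp s] : 0 ≤ Real.exp s - 1 - s),
      abs_of_nonneg hs]
    nlinarith [Real.add_one_le_exp (-s), Real.exp_pos s]
  · rw [abs_of_nonneg (by nlinarith [Real.add_one_le_exp s] : 0 ≤ Real.exp s - 1 - s),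
      abs_of_neg hs]
    nlinarith [Real.add_one_le_exp (-s), Real.exp_pos s]

private lemma inner_abs_le {d : ℕ} (x v : Fin d → ℝ) :
    |∑ l, x l * v l| ≤ (d : ℝ) * ‖x‖ * ‖v‖ := by
  calc |∑ l, x l * v l| ≤ ∑ l, |x l * v l| := Finset.abs_sum_le_sum_abs _ _
    _ ≤ ∑ _l : Fin d, ‖x‖ * ‖v‖ := by
        refine Finset.sum_le_sum fun l _ => ?_
        rw [abs_mul]
        have h1 : |x l| ≤ ‖x‖ := by simpa [Real.norm_eq_abs] using norm_le_pi_norm x l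
        have h2 : |v l| ≤ ‖v‖ := by simpa [Real.norm_eq_abs] using norm_le_pi_norm v l
        exact mul_le_mul h1 h2 (abs_nonneg _) (norm_nonneg _)
    _ = (d : ℝ) * ‖x‖ * ‖v‖ := by simp [Finset.sum_const, Finset.card_univ]; ring

private lemma key_deriv {d k : ℕ} (μ : Measure (Fin d → ℝ))
    (T : (Fin k → ℝ) → (Fin d → ℝ)) (T' : (Fin k → ℝ) →L[ℝ] (Fin d → ℝ))
    (y : Fin k → ℝ) (hT : HasFDerivAt T T' y)
    (φ : (Fin d → ℝ) → ℝ) (hφ : Measurable φ)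
    (w : (Fin d → ℝ) → ℝ) (hw : Measurable w)
    (ψ : (Fin d → ℝ) → ℝ) (hψ : Integrable ψ μ)
    (ε : ℝ) (hε : 0 < ε)
    (hbound : ∀ u : Fin k → ℝ, ‖u‖ < ε → ∀ x,
      |w x| * (1 + ‖x‖) * Real.exp ((∑ l, x l * T (y + u) l) - φ x) ≤ ψ x) :
    HasFDerivAt (fun y' => ∫ x, w x * Real.exp ((∑ l, x l * T y' l) - φ x) ∂μ)
      (∑ l, (∫ x, x l * w x * Real.exp ((∑ l', x l' * T y l') - φ x) ∂μ) •
        ((ContinuousLinearMap.proj l : (Fin d → ℝ) →L[ℝ] ℝ).comp T')) y := by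
  -- abbreviations
  set P : (Fin d → ℝ) → ℝ := fun x => Real.exp ((∑ l', x l' * T y l') - φ x) with hPdef
  have hPpos : ∀ x, 0 < P x := fun x => Real.exp_pos _
  -- ψ is nonnegative
  have hψ0 : ∀ x, 0 ≤ ψ x := by
    intro x
    have := hbound 0 (by simpa using hε) x
    refine le_trans ?_ this
    positivity
  -- measurability
  have mS : ∀ v : Fin d → ℝ, Measurable fun x : Fin d → ℝ => ∑ l, x l * v l := fun v =>
    Finset.measurable_sum _ fun l _ => (measurable_pi_apply l).mul_const _
  have mE : ∀ y', Measurable fun x => Real.exp ((∑ l, x l * T y' l) - φ x) := fun y' =>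
    ((mS (T y')).sub hφ).exp
  have mP : Measurable P := mE y
  -- bound on increments of T near y
  obtain ⟨δ, hδ0, hδε, hΔ⟩ : ∃ δ > 0, δ ≤ ε ∧
      ∀ u : Fin k → ℝ, ‖u‖ < δ → ‖T (y + u) - T y - T' u‖ ≤ ‖u‖ := by
    have h1 := (hasFDerivAt_iff_isLittleO_nhds_zero.mp hT).def one_pos
    rw [Metric.eventually_nhds_iff] at h1
    obtain ⟨δ, hδ0, hδ⟩ := h1
    refine ⟨min δ ε, lt_min hδ0 hε, min_le_right _ _, fun u hu => ?_⟩
    have := hδ (by simpa using lt_of_lt_of_le hu (min_le_left _ _))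
    simpa using this
  have hΔ' : ∀ u : Fin k → ℝ, ‖u‖ < δ → ‖T (y + u) - T y‖ ≤ (‖T'‖ + 1) * ‖u‖ := by
    intro u hu
    have h1 := hΔ u hu
    have h2 : ‖T' u‖ ≤ ‖T'‖ * ‖u‖ := T'.le_opNorm u
    calc ‖T (y + u) - T y‖ = ‖T (y + u) - T y - T' u + T' u‖ := by rw [sub_add_cancel]
      _ ≤ ‖T (y + u) - T y - T' u‖ + ‖T' u‖ := norm_add_le _ _
      _ ≤ (‖T'‖ + 1) * ‖u‖ := by nlinarith [norm_nonneg u]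
  -- integrability workhorse
  have key_int : ∀ v : (Fin d → ℝ) → ℝ, Measurable v → (∀ x, |v x| ≤ |w x| * (1 + ‖x‖)) →
      ∀ u : Fin k → ℝ, ‖u‖ < ε →
      Integrable (fun x => v x * Real.exp ((∑ l, x l * T (y + u) l) - φ x)) μ := by
    intro v hv hvb u hu
    refine Integrable.mono hψ ((hv.mul (mE _)).aestronglyMeasurable) (ae_of_all _ fun x => ?_)
    rw [Real.norm_eq_abs, Real.norm_eq_abs, abs_of_nonneg (hψ0 x), abs_mul,
      abs_of_pos (Real.exp_pos _)]
    refine le_trans ?_ (hbound u hu x)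
    exact mul_le_mul_of_nonneg_right (hvb x) (Real.exp_pos _).le
  have hw1 : ∀ x, |w x| ≤ |w x| * (1 + ‖x‖) := fun x => by
    nlinarith [abs_nonneg (w x), norm_nonneg x]
  have hxl : ∀ l x, |x l * w x| ≤ |w x| * (1 + ‖x‖) := by
    intro l x
    rw [abs_mul]
    have h1 : |x l| ≤ ‖x‖ := by simpa [Real.norm_eq_abs] using norm_le_pi_norm x l
    nlinarith [abs_nonneg (w x), abs_nonneg (x l), norm_nonneg x]
  have e0 : y + (0 : Fin k → ℝ) = y := add_zero y
  have intW : ∀ u : Fin k → ℝ, ‖u‖ < ε →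
      Integrable (fun x => w x * Real.exp ((∑ l, x l * T (y + u) l) - φ x)) μ :=
    fun u hu => key_int w hw hw1 u hu
  have intP : Integrable (fun x => w x * P x) μ := by
    have := intW 0 (by simpa using hε)
    rw [e0] at this
    exact this
  have intXl : ∀ l, Integrable (fun x => x l * w x * P x) μ := by
    intro l
    have := key_int (fun x => x l * w x) ((measurable_pi_apply l).mul hw) (hxl l) 0
      (by simpa using hε)
    rw [e0] at this
    exact this
  have intInner : ∀ v : Fin d → ℝ, Integrable (fun x => w x * P x * ∑ l, x l * v l) μ := by
    intro v
    have h1 : Integrable (fun x => ∑ l, v l * (x l * w x * P x)) μ :=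
      integrable_finset_sum _ fun l _ => (intXl l).const_mul (v l)
    refine h1.congr (ae_of_all _ fun x => ?_)
    dsimp only
    rw [Finset.mul_sum]
    exact Finset.sum_congr rfl fun l _ => by ring
  have intInnerEq : ∀ v : Fin d → ℝ,
      ∫ x, w x * P x * ∑ l, x l * v l ∂μ = ∑ l, v l * ∫ x, x l * w x * P x ∂μ := by
    intro v
    rw [show (fun x => w x * P x * ∑ l, x l * v l)
        = fun x => ∑ l, v l * (x l * w x * P x) from funext fun x => by
      rw [Finset.mul_sum]; exact Finset.sum_congr rfl fun l _ => by ring]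
    rw [integral_finset_sum _ fun l _ => (intXl l).const_mul (v l)]
    exact Finset.sum_congr rfl fun l _ => integral_const_mul _ _
  -- the candidate derivative evaluated
  have Lapp : ∀ u : Fin k → ℝ,
      (∑ l, (∫ x, x l * w x * P x ∂μ) •
        ((ContinuousLinearMap.proj l : (Fin d → ℝ) →L[ℝ] ℝ).comp T')) u
      = ∑ l, T' u l * ∫ x, x l * w x * P x ∂μ := by
    intro u
    rw [ContinuousLinearMap.sum_apply]
    exact Finset.sum_congr rfl fun l _ => by
      simp [ContinuousLinearMap.smul_apply, mul_comm]
  rw [hasFDerivAt_iff_isLittleO_nhds_zero]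
  -- splitting of the exponential
  have peSplit : ∀ (u : Fin k → ℝ) x, Real.exp ((∑ l, x l * T (y + u) l) - φ x)
      = P x * Real.exp (∑ l, x l * (T (y + u) l - T y l)) := by
    intro u x
    rw [hPdef, ← Real.exp_add]
    congr 1
    have hs : ∑ l, x l * (T (y + u) l - T y l)
        = (∑ l, x l * T (y + u) l) - ∑ l, x l * T y l := by
      rw [← Finset.sum_sub_distrib]
      exact Finset.sum_congr rfl fun l _ => by ring
    rw [hs]; ring
  set R1 : (Fin k → ℝ) → ℝ := fun u =>
    ∫ x, w x * P x * (Real.exp (∑ l, x l * (T (y + u) l - T y l)) - 1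
      - ∑ l, x l * (T (y + u) l - T y l)) ∂μ with hR1def
  set R2 : (Fin k → ℝ) → ℝ := fun u =>
    ∫ x, w x * P x * ∑ l, x l * (T (y + u) l - T y l - T' u l) ∂μ with hR2def
  have intR2 : ∀ u : Fin k → ℝ,
      Integrable (fun x => w x * P x * ∑ l, x l * (T (y + u) l - T y l - T' u l)) μ :=
    fun u => intInner (fun l => T (y + u) l - T y l - T' u l)
  have intInnerΔ : ∀ u : Fin k → ℝ,
      Integrable (fun x => w x * P x * ∑ l, x l * (T (y + u) l - T y l)) μ :=
    fun u => intInner (fun l => T (y + u) l - T y l)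
  have intR1 : ∀ u : Fin k → ℝ, ‖u‖ < δ →
      Integrable (fun x => w x * P x * (Real.exp (∑ l, x l * (T (y + u) l - T y l)) - 1
        - ∑ l, x l * (T (y + u) l - T y l))) μ := by
    intro u hu
    have h1 := intW u (lt_of_lt_of_le hu hδε)
    have hsub : Integrable (fun x => w x * Real.exp ((∑ l, x l * T (y + u) l) - φ x)
        - w x * P x - w x * P x * ∑ l, x l * (T (y + u) l - T y l)) μ :=
      (h1.sub intP).sub (intInnerΔ u)
    refine hsub.congr (ae_of_all _ fun x => ?_)
    dsimp only
    rw [peSplit u x]; ring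
  -- eventually the remainder splits as R1 + R2
  have heq : (fun u : Fin k → ℝ =>
      (∫ x, w x * Real.exp ((∑ l, x l * T (y + u) l) - φ x) ∂μ)
      - (∫ x, w x * P x ∂μ)
      - (∑ l, (∫ x, x l * w x * P x ∂μ) •
          ((ContinuousLinearMap.proj l : (Fin d → ℝ) →L[ℝ] ℝ).comp T')) u)
      =ᶠ[nhds 0] fun u => R1 u + R2 u := by
    filter_upwards [Metric.ball_mem_nhds (0 : Fin k → ℝ) hδ0] with u hu
    rw [Metric.mem_ball, dist_zero_right] at hu
    have huε : ‖u‖ < ε := lt_of_lt_of_le hu hδε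
    have hLu : (∑ l, (∫ x, x l * w x * P x ∂μ) •
          ((ContinuousLinearMap.proj l : (Fin d → ℝ) →L[ℝ] ℝ).comp T')) u
        = ∫ x, w x * P x * ∑ l, x l * T' u l ∂μ := by
      rw [Lapp u, intInnerEq (T' u)]
    have hsub1 : Integrable (fun x => w x * Real.exp ((∑ l, x l * T (y + u) l) - φ x)
        - w x * P x) μ := (intW u huε).sub intP
    have e1 : ∫ x, (w x * Real.exp ((∑ l, x l * T (y + u) l) - φ x)
          - w x * P x - w x * P x * ∑ l, x l * T' u l) ∂μ
        = (∫ x, w x * Real.exp ((∑ l, x l * T (y + u) l) - φ x) ∂μ)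
          - (∫ x, w x * P x ∂μ) - ∫ x, w x * P x * ∑ l, x l * T' u l ∂μ := by
      rw [integral_sub hsub1 (intInner (T' u)), integral_sub (intW u huε) intP]
    have e2 : ∫ x, ((w x * P x * (Real.exp (∑ l, x l * (T (y + u) l - T y l)) - 1
            - ∑ l, x l * (T (y + u) l - T y l)))
          + (w x * P x * ∑ l, x l * (T (y + u) l - T y l - T' u l))) ∂μ
        = R1 u + R2 u := integral_add (intR1 u hu) (intR2 u)
    rw [hLu, ← e1, ← e2]
    refine integral_congr_ae (ae_of_all _ fun x => ?_)
    dsimp only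
    have hsplit : ∑ l, x l * (T (y + u) l - T y l - T' u l)
        = (∑ l, x l * (T (y + u) l - T y l)) - ∑ l, x l * T' u l := by
      rw [← Finset.sum_sub_distrib]
      exact Finset.sum_congr rfl fun l _ => by ring
    rw [peSplit u x, hsplit]; ring
  refine IsLittleO.congr' (IsLittleO.add ?_ ?_) heq.symm EventuallyEq.rfl
  · -- R1 is little-o
    refine isLittleO_norm_right.mp ?_
    have hg0 : ∀ u : Fin k → ℝ, ‖u‖ = (0 : ℝ) → R1 u = 0 := by
      intro u hu
      have hu0 : u = 0 := norm_eq_zero.mp hu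
      subst hu0
      simp only [hR1def]
      have hz : ∀ x : Fin d → ℝ, w x * P x * (Real.exp (∑ l, x l * (T (y + 0) l - T y l)) - 1
          - ∑ l, x l * (T (y + 0) l - T y l)) = 0 := by
        intro x; rw [e0]; simp
      rw [show (fun x => w x * P x * (Real.exp (∑ l, x l * (T (y + 0) l - T y l)) - 1
          - ∑ l, x l * (T (y + 0) l - T y l))) = fun _ => (0 : ℝ) from funext hz]
      simp
    rw [isLittleO_iff_tendsto hg0]
    have hDCT := tendsto_integral_filter_of_dominated_convergence
      (μ := μ) (l := nhds (0 : Fin k → ℝ))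
      (F := fun u x => w x * P x * (Real.exp (∑ l, x l * (T (y + u) l - T y l)) - 1
        - ∑ l, x l * (T (y + u) l - T y l)) / ‖u‖)
      (f := fun _ => (0 : ℝ))
      (bound := fun x => 2 * d * (‖T'‖ + 1) * ψ x) ?_ ?_ ?_ ?_
    · rw [integral_zero] at hDCT
      exact hDCT.congr fun u => integral_div _ _
    · -- measurability
      refine Eventually.of_forall fun u => Measurable.aestronglyMeasurable ?_
      exact (((hw.mul mP).mul (((mS _).exp.sub measurable_const).sub (mS _))).div_const _)
    · -- uniform bound
      filter_upwards [Metric.ball_mem_nhds (0 : Fin k → ℝ) hδ0] with u hu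
      rw [Metric.mem_ball, dist_zero_right] at hu
      refine ae_of_all _ fun x => ?_
      rcases eq_or_ne u 0 with rfl | hu0
      · have : w x * P x * (Real.exp (∑ l, x l * (T (y + 0) l - T y l)) - 1
            - ∑ l, x l * (T (y + 0) l - T y l)) = 0 := by rw [e0]; simp
        rw [this]
        simp only [zero_div, norm_zero]
        exact mul_nonneg (by positivity) (hψ0 x)
      · have hup : 0 < ‖u‖ := norm_pos_iff.mpr hu0
        rw [Real.norm_eq_abs, abs_div, abs_of_pos hup, div_le_iff₀ hup]
        have h1 := exp_taylor_bound (∑ l, x l * (T (y + u) l - T y l))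
        have h2 : |∑ l, x l * (T (y + u) l - T y l)| ≤ (d : ℝ) * ‖x‖ * ‖T (y + u) - T y‖ := by
          simpa [Pi.sub_apply] using inner_abs_le x (T (y + u) - T y)
        have h3 : |w x| * ‖x‖ * (P x * Real.exp (∑ l, x l * (T (y + u) l - T y l))) ≤ ψ x := by
          have hb := hbound u (lt_of_lt_of_le hu hδε) x
          rw [peSplit u x] at hb
          refine le_trans ?_ hb
          have hx1 : ‖x‖ ≤ 1 + ‖x‖ := by linarith [norm_nonneg x]
          exact mul_le_mul_of_nonneg_right
            (mul_le_mul_of_nonneg_left hx1 (abs_nonneg _))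
            (mul_pos (hPpos x) (Real.exp_pos _)).le
        have h4 : |w x| * ‖x‖ * P x ≤ ψ x := by
          have hb := hbound 0 (by simpa using hε) x
          rw [e0] at hb
          refine le_trans ?_ hb
          have hx1 : ‖x‖ ≤ 1 + ‖x‖ := by linarith [norm_nonneg x]
          exact mul_le_mul_of_nonneg_right
            (mul_le_mul_of_nonneg_left hx1 (abs_nonneg _)) (hPpos x).le
        have h5 : ‖T (y + u) - T y‖ ≤ (‖T'‖ + 1) * ‖u‖ := hΔ' u hu
        have hwP : (0 : ℝ) ≤ |w x| * P x := mul_nonneg (abs_nonneg _) (hPpos x).le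
        calc |w x * P x * (Real.exp (∑ l, x l * (T (y + u) l - T y l)) - 1
              - ∑ l, x l * (T (y + u) l - T y l))|
            = |w x| * P x * |Real.exp (∑ l, x l * (T (y + u) l - T y l)) - 1
              - ∑ l, x l * (T (y + u) l - T y l)| := by
              rw [abs_mul, abs_mul, abs_of_pos (hPpos x)]
          _ ≤ |w x| * P x * (|∑ l, x l * (T (y + u) l - T y l)|
              * (Real.exp (∑ l, x l * (T (y + u) l - T y l)) + 1)) :=
              mul_le_mul_of_nonneg_left h1 hwP
          _ ≤ |w x| * P x * (((d : ℝ) * ‖x‖ * ‖T (y + u) - T y‖)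
              * (Real.exp (∑ l, x l * (T (y + u) l - T y l)) + 1)) := by
              refine mul_le_mul_of_nonneg_left (mul_le_mul_of_nonneg_right h2 ?_) hwP
              positivity
          _ = (d : ℝ) * ‖T (y + u) - T y‖
              * (|w x| * ‖x‖ * (P x * Real.exp (∑ l, x l * (T (y + u) l - T y l)))
                + |w x| * ‖x‖ * P x) := by ring
          _ ≤ (d : ℝ) * ‖T (y + u) - T y‖ * (ψ x + ψ x) := by
              refine mul_le_mul_of_nonneg_left (add_le_add h3 h4) ?_
              positivity
          _ = 2 * d * ψ x * ‖T (y + u) - T y‖ := by ring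
          _ ≤ 2 * d * ψ x * ((‖T'‖ + 1) * ‖u‖) := by
              refine mul_le_mul_of_nonneg_left h5 ?_
              have := hψ0 x
              positivity
          _ = 2 * d * (‖T'‖ + 1) * ψ x * ‖u‖ := by ring
    · -- integrable bound
      exact hψ.const_mul _
    · -- pointwise convergence
      refine ae_of_all _ fun x => ?_
      have hadd : Tendsto (fun u : Fin k → ℝ => y + u) (nhds 0) (nhds y) := by
        simpa using (continuous_add_left y).tendsto (0 : Fin k → ℝ)
      have hΔt : Tendsto (fun u : Fin k → ℝ => T (y + u) - T y) (nhds 0) (nhds 0) := by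
        have h1 := (hT.continuousAt.tendsto).comp hadd
        simpa using h1.sub (tendsto_const_nhds (x := T y))
      have hSt : Tendsto (fun u : Fin k → ℝ => ∑ l, x l * (T (y + u) l - T y l))
          (nhds 0) (nhds 0) := by
        have hterm : ∀ l : Fin d, Tendsto (fun u : Fin k → ℝ => x l * (T (y + u) l - T y l))
            (nhds 0) (nhds 0) := by
          intro l
          have h1 : Tendsto (fun u : Fin k → ℝ => T (y + u) l - T y l) (nhds 0) (nhds (0 : ℝ)) := by
            have := ((continuous_apply l).tendsto (0 : Fin d → ℝ)).comp hΔt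
            exact this
          simpa using (tendsto_const_nhds (x := x l)).mul h1
        have := tendsto_finset_sum (Finset.univ : Finset (Fin d)) fun l _ => hterm l
        simpa using this
      have hev1 : ∀ᶠ u : Fin k → ℝ in nhds 0, |∑ l, x l * (T (y + u) l - T y l)| ≤ 1 := by
        have := hSt.eventually (eventually_abs_sub_lt 0 one_pos)
        filter_upwards [this] with u hu
        rw [sub_zero] at hu
        exact hu.le
      rw [tendsto_zero_iff_abs_tendsto_zero]
      have hC : (0 : ℝ) ≤ |w x| * P x * ((d : ℝ) * ‖x‖) ^ 2 * (‖T'‖ + 1) ^ 2 := by positivity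
      refine squeeze_zero' (g := fun u : Fin k → ℝ =>
          |w x| * P x * ((d : ℝ) * ‖x‖) ^ 2 * (‖T'‖ + 1) ^ 2 * ‖u‖)
        (Eventually.of_forall fun u => abs_nonneg _) ?_ ?_
      · filter_upwards [hev1, Metric.ball_mem_nhds (0 : Fin k → ℝ) hδ0] with u h1 h2
        rw [Metric.mem_ball, dist_zero_right] at h2
        dsimp only [Function.comp]
        rcases eq_or_ne u 0 with rfl | hu0
        · have hz : w x * P x * (Real.exp (∑ l, x l * (T (y + 0) l - T y l)) - 1
              - ∑ l, x l * (T (y + 0) l - T y l)) = 0 := by rw [e0]; simp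
          rw [hz]
          simp
        · have hup : 0 < ‖u‖ := norm_pos_iff.mpr hu0
          rw [abs_div, abs_of_pos hup, div_le_iff₀ hup]
          have h6 := Real.abs_exp_sub_one_sub_id_le h1
          have h2' : |∑ l, x l * (T (y + u) l - T y l)| ≤ (d : ℝ) * ‖x‖ * ‖T (y + u) - T y‖ := by
            simpa [Pi.sub_apply] using inner_abs_le x (T (y + u) - T y)
          have h5 : ‖T (y + u) - T y‖ ≤ (‖T'‖ + 1) * ‖u‖ := hΔ' u h2
          have hwP : (0 : ℝ) ≤ |w x| * P x := mul_nonneg (abs_nonneg _) (hPpos x).le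
          calc |w x * P x * (Real.exp (∑ l, x l * (T (y + u) l - T y l)) - 1
                - ∑ l, x l * (T (y + u) l - T y l))|
              = |w x| * P x * |Real.exp (∑ l, x l * (T (y + u) l - T y l)) - 1
                - ∑ l, x l * (T (y + u) l - T y l)| := by
                rw [abs_mul, abs_mul, abs_of_pos (hPpos x)]
            _ ≤ |w x| * P x * (∑ l, x l * (T (y + u) l - T y l)) ^ 2 :=
                mul_le_mul_of_nonneg_left h6 hwP
            _ = |w x| * P x * |∑ l, x l * (T (y + u) l - T y l)| ^ 2 := by rw [sq_abs]
            _ ≤ |w x| * P x * ((d : ℝ) * ‖x‖ * ‖T (y + u) - T y‖) ^ 2 := by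
                refine mul_le_mul_of_nonneg_left (pow_le_pow_left₀ (abs_nonneg _) h2' 2) hwP
            _ ≤ |w x| * P x * ((d : ℝ) * ‖x‖ * ((‖T'‖ + 1) * ‖u‖)) ^ 2 := by
                refine mul_le_mul_of_nonneg_left
                  (pow_le_pow_left₀ (by positivity) ?_ 2) hwP
                refine mul_le_mul_of_nonneg_left h5 (by positivity)
            _ = |w x| * P x * ((d : ℝ) * ‖x‖) ^ 2 * (‖T'‖ + 1) ^ 2 * ‖u‖ * ‖u‖ := by ring
      · have := (tendsto_norm_zero (E := Fin k → ℝ)).const_mul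
          (|w x| * P x * ((d : ℝ) * ‖x‖) ^ 2 * (‖T'‖ + 1) ^ 2)
        simpa using this
  · -- R2 is little-o
    have hO : R2 =O[nhds 0] fun u => T (y + u) - T y - T' u := by
      rw [isBigO_iff]
      refine ⟨(d : ℝ) * ∫ x, ψ x ∂μ, Eventually.of_forall fun u => ?_⟩
      have bnd : ∀ x, ‖w x * P x * ∑ l, x l * (T (y + u) l - T y l - T' u l)‖
          ≤ (d : ℝ) * ψ x * ‖T (y + u) - T y - T' u‖ := by
        intro x
        have h2 : |∑ l, x l * (T (y + u) l - T y l - T' u l)|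
            ≤ (d : ℝ) * ‖x‖ * ‖T (y + u) - T y - T' u‖ := by
          simpa [Pi.sub_apply] using inner_abs_le x (T (y + u) - T y - T' u)
        have h3 : |w x| * ‖x‖ * P x ≤ ψ x := by
          have hb := hbound 0 (by simpa using hε) x
          rw [e0] at hb
          refine le_trans ?_ hb
          have hx1 : ‖x‖ ≤ 1 + ‖x‖ := by linarith [norm_nonneg x]
          exact mul_le_mul_of_nonneg_right
            (mul_le_mul_of_nonneg_left hx1 (abs_nonneg _)) (hPpos x).le
        rw [Real.norm_eq_abs, abs_mul, abs_mul, abs_of_pos (hPpos x)]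
        calc |w x| * P x * |∑ l, x l * (T (y + u) l - T y l - T' u l)|
            ≤ |w x| * P x * ((d : ℝ) * ‖x‖ * ‖T (y + u) - T y - T' u‖) :=
              mul_le_mul_of_nonneg_left h2 (mul_nonneg (abs_nonneg _) (hPpos x).le)
          _ = (d : ℝ) * (|w x| * ‖x‖ * P x) * ‖T (y + u) - T y - T' u‖ := by ring
          _ ≤ (d : ℝ) * ψ x * ‖T (y + u) - T y - T' u‖ := by
              refine mul_le_mul_of_nonneg_right
                (mul_le_mul_of_nonneg_left h3 (by positivity)) (norm_nonneg _)
      calc ‖R2 u‖ ≤ ∫ x, (d : ℝ) * ψ x * ‖T (y + u) - T y - T' u‖ ∂μ := by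
            simp only [hR2def]
            exact norm_integral_le_of_norm_le ((hψ.const_mul _).mul_const _) (ae_of_all _ bnd)
        _ = (d : ℝ) * (∫ x, ψ x ∂μ) * ‖T (y + u) - T y - T' u‖ := by
            rw [integral_mul_const, integral_const_mul]
        _ ≤ (d : ℝ) * (∫ x, ψ x ∂μ) * ‖T (y + u) - T y - T' u‖ := le_refl _
    exact hO.trans_isLittleO (hasFDerivAt_iff_isLittleO_nhds_zero.mp hT)


/-- Exponential-family derivative identity (Theorem 2):
`J_y E[U|Y=y] = (J_y T(y)) · Cov(X, U | Y=y)`. -/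
theorem stmt_2
    {d k m : ℕ}
    (μ : Measure (Fin d → ℝ)) [IsProbabilityMeasure μ]
    (𝒴 : Set (Fin k → ℝ)) (h𝒴 : IsOpen 𝒴)
    (h : (Fin k → ℝ) → ℝ)
    (hhpos : ∀ y ∈ 𝒴, 0 < h y)
    (hhdiff : ∀ y ∈ 𝒴, DifferentiableAt ℝ h y)
    (T : (Fin k → ℝ) → (Fin d → ℝ))
    (T' : (Fin k → ℝ) → ((Fin k → ℝ) →L[ℝ] (Fin d → ℝ)))
    (hT : ∀ y ∈ 𝒴, HasFDerivAt T (T' y) y)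
    (φ : (Fin d → ℝ) → ℝ) (hφ : Measurable φ)
    (f : (Fin k → ℝ) → (Fin d → ℝ) → ℝ)
    (hf : ∀ y x, f y x = h y * Real.exp ((∑ l, x l * T y l) - φ x))
    (fY : (Fin k → ℝ) → ℝ)
    (hfY : ∀ y, fY y = ∫ x, f y x ∂μ)
    (hfYpos : ∀ y ∈ 𝒴, 0 < fY y)
    (hfYfin : ∀ y ∈ 𝒴, Integrable (fun x => f y x) μ)
    (g : (Fin d → ℝ) → (Fin m → ℝ)) (hg : Measurable g)
    (F : (Fin k → ℝ) → (Fin m → ℝ))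
    (hF : ∀ y i, F y i = (∫ x, g x i * f y x ∂μ) / fY y)
    (hdom : ∀ y ∈ 𝒴, ∃ N ∈ nhds y, ∃ ψ : (Fin d → ℝ) → ℝ, Integrable ψ μ ∧
      ∀ y' ∈ N, ∀ x,
        (1 + ‖g x‖) * (1 + ‖x‖) * Real.exp ((∑ l, x l * T y' l) - φ x) ≤ ψ x) :
    ∀ y ∈ 𝒴,
      DifferentiableAt ℝ F y ∧
      ∀ (i : Fin m) (j : Fin k),
        fderiv ℝ F y (Pi.single j 1) i =
          ∑ l, (T' y (Pi.single j 1) l) *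
            ((∫ x, x l * g x i * f y x ∂μ) / fY y
              - ((∫ x, x l * f y x ∂μ) / fY y)
                * ((∫ x, g x i * f y x ∂μ) / fY y)) := by
  intro y hy
  obtain ⟨N, hN, ψ, hψI, hψb⟩ := hdom y hy
  obtain ⟨ε, hε, hball⟩ : ∃ ε > 0, Metric.ball y ε ⊆ N ∩ 𝒴 := by
    have : N ∩ 𝒴 ∈ nhds y := Filter.inter_mem hN (h𝒴.mem_nhds hy)
    exact Metric.mem_nhds_iff.mp this
  have hyin : ∀ u : Fin k → ℝ, ‖u‖ < ε → y + u ∈ N ∩ 𝒴 := by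
    intro u hu
    refine hball ?_
    rw [Metric.mem_ball]
    simpa [dist_eq_norm] using hu
  -- derivative of the basic integral functionals
  have hder : ∀ w : (Fin d → ℝ) → ℝ, Measurable w → (∀ x, |w x| ≤ 1 + ‖g x‖) →
      HasFDerivAt (fun y' => ∫ x, w x * Real.exp ((∑ l, x l * T y' l) - φ x) ∂μ)
        (∑ l, (∫ x, x l * w x * Real.exp ((∑ l', x l' * T y l') - φ x) ∂μ) •
          ((ContinuousLinearMap.proj l : (Fin d → ℝ) →L[ℝ] ℝ).comp (T' y))) y := by
    intro w hw hwg
    refine key_deriv μ T (T' y) y (hT y hy) φ hφ w hw ψ hψI ε hε ?_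
    intro u hu x
    have hmem := hyin u hu
    refine le_trans ?_ (hψb (y + u) hmem.1 x)
    have h1 : |w x| * (1 + ‖x‖) ≤ (1 + ‖g x‖) * (1 + ‖x‖) :=
      mul_le_mul_of_nonneg_right (hwg x) (by positivity)
    exact mul_le_mul_of_nonneg_right h1 (Real.exp_pos _).le
  have hd1 : HasFDerivAt (fun y' => ∫ x, (1 : ℝ) * Real.exp ((∑ l, x l * T y' l) - φ x) ∂μ)
      (∑ l, (∫ x, x l * (1 : ℝ) * Real.exp ((∑ l', x l' * T y l') - φ x) ∂μ) •
        ((ContinuousLinearMap.proj l : (Fin d → ℝ) →L[ℝ] ℝ).comp (T' y))) y := by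
    have := hder (fun _ => (1 : ℝ)) measurable_const (fun x => by
      simp only [abs_one]
      linarith [norm_nonneg (g x)])
    exact this
  have hdi : ∀ i : Fin m, HasFDerivAt
      (fun y' => ∫ x, g x i * Real.exp ((∑ l, x l * T y' l) - φ x) ∂μ)
      (∑ l, (∫ x, x l * g x i * Real.exp ((∑ l', x l' * T y l') - φ x) ∂μ) •
        ((ContinuousLinearMap.proj l : (Fin d → ℝ) →L[ℝ] ℝ).comp (T' y))) y := by
    intro i
    refine hder (fun x => g x i) ((measurable_pi_apply i).comp hg) fun x => ?_
    have h1 : |g x i| ≤ ‖g x‖ := by simpa [Real.norm_eq_abs] using norm_le_pi_norm (g x) i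
    linarith
  -- positivity of the denominator
  have hh0 : h y ≠ 0 := (hhpos y hy).ne'
  have hfY1 : fY y = h y * ∫ x, (1 : ℝ) * Real.exp ((∑ l, x l * T y l) - φ x) ∂μ := by
    rw [hfY y]
    calc ∫ x, f y x ∂μ
        = ∫ x, h y * ((1 : ℝ) * Real.exp ((∑ l, x l * T y l) - φ x)) ∂μ :=
          integral_congr_ae (ae_of_all _ fun x => by simp only [hf]; ring)
      _ = h y * ∫ x, (1 : ℝ) * Real.exp ((∑ l, x l * T y l) - φ x) ∂μ := integral_const_mul _ _
  have hI1pos : 0 < ∫ x, (1 : ℝ) * Real.exp ((∑ l, x l * T y l) - φ x) ∂μ := by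
    have h1 : 0 < h y * ∫ x, (1 : ℝ) * Real.exp ((∑ l, x l * T y l) - φ x) ∂μ := by
      rw [← hfY1]; exact hfYpos y hy
    rcases mul_pos_iff.mp h1 with ⟨_, h2⟩ | ⟨h2, _⟩
    · exact h2
    · linarith [hhpos y hy]
  have hI1ne : (∫ x, (1 : ℝ) * Real.exp ((∑ l, x l * T y l) - φ x) ∂μ) ≠ 0 := hI1pos.ne'
  -- local representation of F
  have hFeq : F =ᶠ[nhds y] fun y' i =>
      (∫ x, g x i * Real.exp ((∑ l, x l * T y' l) - φ x) ∂μ)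
      * (∫ x, (1 : ℝ) * Real.exp ((∑ l, x l * T y' l) - φ x) ∂μ)⁻¹ := by
    filter_upwards [Metric.ball_mem_nhds y hε] with y' hy'
    have hy𝒴 : y' ∈ 𝒴 := (hball hy').2
    funext i
    have hnum : ∫ x, g x i * f y' x ∂μ
        = h y' * ∫ x, g x i * Real.exp ((∑ l, x l * T y' l) - φ x) ∂μ := by
      calc ∫ x, g x i * f y' x ∂μ
          = ∫ x, h y' * (g x i * Real.exp ((∑ l, x l * T y' l) - φ x)) ∂μ :=
            integral_congr_ae (ae_of_all _ fun x => by simp only [hf]; ring)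
        _ = h y' * ∫ x, g x i * Real.exp ((∑ l, x l * T y' l) - φ x) ∂μ := integral_const_mul _ _
    have hden : fY y' = h y' * ∫ x, (1 : ℝ) * Real.exp ((∑ l, x l * T y' l) - φ x) ∂μ := by
      rw [hfY y']
      calc ∫ x, f y' x ∂μ
          = ∫ x, h y' * ((1 : ℝ) * Real.exp ((∑ l, x l * T y' l) - φ x)) ∂μ :=
            integral_congr_ae (ae_of_all _ fun x => by simp only [hf]; ring)
        _ = h y' * ∫ x, (1 : ℝ) * Real.exp ((∑ l, x l * T y' l) - φ x) ∂μ := integral_const_mul _ _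
    rw [hF y' i, hnum, hden, mul_div_mul_left _ _ (hhpos y' hy𝒴).ne', div_eq_mul_inv]
  -- derivative of each coordinate of the local representation
  have hinv : HasFDerivAt
      (fun y' => (∫ x, (1 : ℝ) * Real.exp ((∑ l, x l * T y' l) - φ x) ∂μ)⁻¹)
      ((ContinuousLinearMap.smulRight (1 : ℝ →L[ℝ] ℝ)
          (-((∫ x, (1 : ℝ) * Real.exp ((∑ l, x l * T y l) - φ x) ∂μ) ^ 2)⁻¹)).comp
        (∑ l, (∫ x, x l * (1 : ℝ) * Real.exp ((∑ l', x l' * T y l') - φ x) ∂μ) •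
          ((ContinuousLinearMap.proj l : (Fin d → ℝ) →L[ℝ] ℝ).comp (T' y)))) y :=
    (hasFDerivAt_inv hI1ne).comp y hd1
  set L1 : (Fin k → ℝ) →L[ℝ] ℝ :=
    ∑ l, (∫ x, x l * (1 : ℝ) * Real.exp ((∑ l', x l' * T y l') - φ x) ∂μ) •
      ((ContinuousLinearMap.proj l : (Fin d → ℝ) →L[ℝ] ℝ).comp (T' y)) with hL1def
  set Li : Fin m → ((Fin k → ℝ) →L[ℝ] ℝ) := fun i =>
    ∑ l, (∫ x, x l * g x i * Real.exp ((∑ l', x l' * T y l') - φ x) ∂μ) •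
      ((ContinuousLinearMap.proj l : (Fin d → ℝ) →L[ℝ] ℝ).comp (T' y)) with hLidef
  set D : Fin m → ((Fin k → ℝ) →L[ℝ] ℝ) := fun i =>
    (∫ x, g x i * Real.exp ((∑ l, x l * T y l) - φ x) ∂μ) •
      ((ContinuousLinearMap.smulRight (1 : ℝ →L[ℝ] ℝ)
          (-((∫ x, (1 : ℝ) * Real.exp ((∑ l, x l * T y l) - φ x) ∂μ) ^ 2)⁻¹)).comp L1)
    + (∫ x, (1 : ℝ) * Real.exp ((∑ l, x l * T y l) - φ x) ∂μ)⁻¹ • (Li i) with hDdef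
  have hquot : ∀ i : Fin m, HasFDerivAt
      (fun y' => (∫ x, g x i * Real.exp ((∑ l, x l * T y' l) - φ x) ∂μ)
        * (∫ x, (1 : ℝ) * Real.exp ((∑ l, x l * T y' l) - φ x) ∂μ)⁻¹)
      (D i) y := fun i => (hdi i).mul hinv
  have hG : HasFDerivAt (fun y' i =>
      (∫ x, g x i * Real.exp ((∑ l, x l * T y' l) - φ x) ∂μ)
      * (∫ x, (1 : ℝ) * Real.exp ((∑ l, x l * T y' l) - φ x) ∂μ)⁻¹)
      (ContinuousLinearMap.pi D) y := by
    refine hasFDerivAt_pi'' fun i => ?_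
    rw [ContinuousLinearMap.proj_pi]
    exact hquot i
  have hF' : HasFDerivAt F (ContinuousLinearMap.pi D) y := hG.congr_of_eventuallyEq hFeq
  refine ⟨hF'.differentiableAt, ?_⟩
  intro i j
  rw [hF'.fderiv]
  -- rewrite the RHS integrals in terms of the normalized density
  have hAi : ∀ l, ∫ x, x l * g x i * f y x ∂μ
      = h y * ∫ x, x l * g x i * Real.exp ((∑ l', x l' * T y l') - φ x) ∂μ := by
    intro l
    calc ∫ x, x l * g x i * f y x ∂μ
        = ∫ x, h y * (x l * g x i * Real.exp ((∑ l', x l' * T y l') - φ x)) ∂μ :=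
          integral_congr_ae (ae_of_all _ fun x => by simp only [hf]; ring)
      _ = _ := integral_const_mul _ _
  have hB : ∀ l, ∫ x, x l * f y x ∂μ
      = h y * ∫ x, x l * (1 : ℝ) * Real.exp ((∑ l', x l' * T y l') - φ x) ∂μ := by
    intro l
    calc ∫ x, x l * f y x ∂μ
        = ∫ x, h y * (x l * (1 : ℝ) * Real.exp ((∑ l', x l' * T y l') - φ x)) ∂μ :=
          integral_congr_ae (ae_of_all _ fun x => by simp only [hf]; ring)
      _ = _ := integral_const_mul _ _
  have hC : ∫ x, g x i * f y x ∂μ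
      = h y * ∫ x, g x i * Real.exp ((∑ l, x l * T y l) - φ x) ∂μ := by
    calc ∫ x, g x i * f y x ∂μ
        = ∫ x, h y * (g x i * Real.exp ((∑ l, x l * T y l) - φ x)) ∂μ :=
          integral_congr_ae (ae_of_all _ fun x => by simp only [hf]; ring)
      _ = _ := integral_const_mul _ _
  rw [hfY1]
  simp only [hAi, hB, hC]
  simp only [mul_div_mul_left _ _ hh0]
  -- now evaluate the linear maps
  simp only [hDdef, hL1def, hLidef, ContinuousLinearMap.pi_apply,
    ContinuousLinearMap.add_apply, ContinuousLinearMap.smul_apply,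
    ContinuousLinearMap.coe_comp', Function.comp_apply,
    ContinuousLinearMap.smulRight_apply, ContinuousLinearMap.one_apply,
    ContinuousLinearMap.sum_apply, ContinuousLinearMap.proj_apply, smul_eq_mul]
  have alg : ∀ e c : ℝ, e ≠ 0 → ∀ a b t : Fin d → ℝ,
      c * ((∑ l, b l * t l) * -(e ^ 2)⁻¹) + e⁻¹ * ∑ l, a l * t l
      = ∑ l, t l * (a l / e - b l / e * (c / e)) := by
    intro e c he a b t
    have hterm : ∀ l ∈ (Finset.univ : Finset (Fin d)),
        t l * (a l / e - b l / e * (c / e))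
        = e⁻¹ * (a l * t l) + (c * -(e ^ 2)⁻¹) * (b l * t l) := by
      intro l _
      field_simp
      ring
    rw [Finset.sum_congr rfl hterm, Finset.sum_add_distrib, ← Finset.mul_sum, ← Finset.mul_sum]
    ring
  exact alg _ _ hI1ne
    (fun l => ∫ x, x l * g x i * Real.exp ((∑ l', x l' * T y l') - φ x) ∂μ)
    (fun l => ∫ x, x l * (1 : ℝ) * Real.exp ((∑ l', x l' * T y l') - φ x) ∂μ)
    (fun l => T' y (Pi.single j 1) l)
end

section
/- (Variance identity, Proposition 1.) In the exponential-family setup of the context, assume that for every y ∈ 𝒴 there exist a neighborhood N of y and a μ-integrable ψ with (1 + ‖x‖)^2 exp(⟨x, T(y')⟩ − φ(x)) ≤ ψ(x) for all y' ∈ N and all x. Then F(y) := E[X|Y=y] is differentiable on 𝒴 and for every y ∈ 𝒴 and all i, l ∈ {1,…,d}, j ∈ {1,…,k}: ∂F_i/∂y_j (y) = Σ_{l=1}^d (∂T_l/∂y_j)(y) · Cov( X_l, X_i | Y = y ); in matrix form, J_y E[X|Y=y] = (J_y T(y)) · Var(X | Y=y), where Var(X|Y=y) is the posterior covariance matrix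 of X. -/
open MeasureTheory
open Filter Asymptotics

lemma aux_exp_bound (t : ℝ) : |Real.exp t - 1 - t| ≤ |t| * |Real.exp t - 1| := by
  have h0 : 0 ≤ Real.exp t - 1 - t := by nlinarith [Real.add_one_le_exp t]
  have h1 : Real.exp t * (1 - t) ≤ 1 := by
    have h := Real.add_one_le_exp (-t)
    have h2 := mul_le_mul_of_nonneg_left h (Real.exp_pos t).le
    rw [← Real.exp_add] at h2
    simp at h2
    nlinarith
  rw [abs_of_nonneg h0]
  rcases le_or_gt 0 t with ht | ht
  · rw [abs_of_nonneg ht, abs_of_nonneg (by nlinarith [Real.one_le_exp ht] : (0:ℝ) ≤ Real.exp t - 1)]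
    nlinarith
  · rw [abs_of_neg ht, abs_of_nonpos (by nlinarith [Real.exp_le_one_iff.mpr ht.le] : Real.exp t - 1 ≤ 0)]
    nlinarith

lemma aux_ip_abs {d : ℕ} (x u : Fin d → ℝ) : |∑ l, x l * u l| ≤ d * (‖x‖ * ‖u‖) := by
  calc |∑ l, x l * u l| ≤ ∑ l, |x l * u l| := Finset.abs_sum_le_sum_abs _ _
    _ ≤ ∑ _l : Fin d, ‖x‖ * ‖u‖ := by
        refine Finset.sum_le_sum fun l _ => ?_
        rw [abs_mul]
        have h1 : |x l| ≤ ‖x‖ := by simpa [Real.norm_eq_abs] using norm_le_pi_norm x l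
        have h2 : |u l| ≤ ‖u‖ := by simpa [Real.norm_eq_abs] using norm_le_pi_norm u l
        exact mul_le_mul h1 h2 (abs_nonneg _) (norm_nonneg _)
    _ = d * (‖x‖ * ‖u‖) := by simp [Finset.sum_const, mul_comm]

lemma aux_measE {d : ℕ} {φ : (Fin d → ℝ) → ℝ} (hφ : Measurable φ) (θ : Fin d → ℝ) :
    Measurable fun x : Fin d → ℝ => Real.exp ((∑ l, x l * θ l) - φ x) := by
  have h1 : Measurable fun x : Fin d → ℝ => ∑ l, x l * θ l :=
    Finset.measurable_sum _ fun l _ => (measurable_pi_apply l).mul_const _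
  exact Real.measurable_exp.comp (h1.sub hφ)

lemma aux_integrable {d : ℕ} (μ : Measure (Fin d → ℝ)) (φ : (Fin d → ℝ) → ℝ)
    (hφ : Measurable φ) (θ : Fin d → ℝ) (ψ : (Fin d → ℝ) → ℝ) (hψ : Integrable ψ μ)
    (hbd : ∀ x, (1 + ‖x‖) ^ 2 * Real.exp ((∑ l, x l * θ l) - φ x) ≤ ψ x)
    (g : (Fin d → ℝ) → ℝ) (C : ℝ) (hg : Measurable g)
    (hgb : ∀ x, |g x| ≤ C * (1 + ‖x‖) ^ 2) :
    Integrable (fun x => g x * Real.exp ((∑ l, x l * θ l) - φ x)) μ := by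
  have hC : 0 ≤ C := by
    have h := (abs_nonneg (g 0)).trans (hgb 0)
    rw [norm_zero] at h
    nlinarith
  refine (hψ.const_mul C).mono' ((hg.mul (aux_measE hφ θ)).aestronglyMeasurable)
    (Eventually.of_forall fun x => ?_)
  have h1 := hbd x
  have h2 := hgb x
  have h3 := Real.exp_pos ((∑ l, x l * θ l) - φ x)
  rw [Real.norm_eq_abs, abs_mul, abs_of_pos h3]
  nlinarith [abs_nonneg (g x), norm_nonneg x]

lemma key{d kk : ℕ} (μ : Measure (Fin d → ℝ)) [IsProbabilityMeasure μ]
    (φ : (Fin d → ℝ) → ℝ) (hφ : Measurable φ)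
    (T : (Fin kk → ℝ) → (Fin d → ℝ)) (T' : (Fin kk → ℝ) →L[ℝ] (Fin d → ℝ))
    (y : Fin kk → ℝ) (hT : HasFDerivAt T T' y)
    (N : Set (Fin kk → ℝ)) (hN : N ∈ nhds y)
    (ψ : (Fin d → ℝ) → ℝ) (hψ : Integrable ψ μ)
    (hbd : ∀ y' ∈ N, ∀ x, (1 + ‖x‖) ^ 2 * Real.exp ((∑ l, x l * T y' l) - φ x) ≤ ψ x)
    (w : (Fin d → ℝ) → ℝ) (hw : Measurable w) (hwb : ∀ x, |w x| ≤ 1 + ‖x‖) :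
    ∃ D : (Fin kk → ℝ) →L[ℝ] ℝ,
      (∀ v, D v = ∫ x, w x * (∑ l, x l * T' v l) * Real.exp ((∑ l, x l * T y l) - φ x) ∂μ) ∧
      HasFDerivAt (fun y' => ∫ x, w x * Real.exp ((∑ l, x l * T y' l) - φ x) ∂μ) D y := by
  have hyN : y ∈ N := mem_of_mem_nhds hN
  have hdnn : (0:ℝ) ≤ (d:ℝ) := Nat.cast_nonneg d
  -- integrability of w * E(y')
  have hIw : ∀ y' ∈ N, Integrable (fun x => w x * Real.exp ((∑ l, x l * T y' l) - φ x)) μ :=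
    fun y' hy' => aux_integrable μ φ hφ (T y') ψ hψ (hbd y' hy') w 1 hw
      (fun x => by nlinarith [hwb x, norm_nonneg x, abs_nonneg (w x)])
  -- integrability of (w * ip u) * E(y)
  have hIwip : ∀ u : Fin d → ℝ,
      Integrable (fun x => (w x * ∑ l, x l * u l) * Real.exp ((∑ l, x l * T y l) - φ x)) μ := by
    intro u
    refine aux_integrable μ φ hφ (T y) ψ hψ (hbd y hyN)
      (fun x => w x * ∑ l, x l * u l) (d * ‖u‖)
      (hw.mul (Finset.measurable_sum _ fun l _ => (measurable_pi_apply l).mul_const _))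
      (fun x => ?_)
    rw [abs_mul]
    calc |w x| * |∑ l, x l * u l| ≤ (1 + ‖x‖) * (d * (‖x‖ * ‖u‖)) :=
          mul_le_mul (hwb x) (aux_ip_abs x u) (abs_nonneg _) (by positivity)
      _ ≤ d * ‖u‖ * (1 + ‖x‖) ^ 2 := by
          nlinarith [norm_nonneg x, norm_nonneg u,
            mul_nonneg (mul_nonneg hdnn (norm_nonneg u)) (norm_nonneg x)]
  -- the linear map M
  obtain ⟨M, hM⟩ : ∃ M : (Fin d → ℝ) →ₗ[ℝ] ℝ, ∀ u,
      M u = ∫ x, (w x * ∑ l, x l * u l) * Real.exp ((∑ l, x l * T y l) - φ x) ∂μ := by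
    refine ⟨{ toFun := fun u => ∫ x, (w x * ∑ l, x l * u l) *
        Real.exp ((∑ l, x l * T y l) - φ x) ∂μ, map_add' := ?_, map_smul' := ?_ }, fun u => rfl⟩
    · intro u v
      show (∫ x, (w x * ∑ l, x l * (u + v) l) * Real.exp ((∑ l, x l * T y l) - φ x) ∂μ) = _
      rw [← integral_add (hIwip u) (hIwip v)]
      congr 1; funext x
      have : ∑ l, x l * (u + v) l = (∑ l, x l * u l) + ∑ l, x l * v l := by
        rw [← Finset.sum_add_distrib]
        exact Finset.sum_congr rfl fun l _ => by simp only [Pi.add_apply]; ring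
      rw [this]; ring
    · intro c u
      simp only [RingHom.id_apply, smul_eq_mul]
      show (∫ x, (w x * ∑ l, x l * (c • u) l) * Real.exp ((∑ l, x l * T y l) - φ x) ∂μ) = _
      rw [← integral_const_mul]
      congr 1; funext x
      have : ∑ l, x l * (c • u) l = c * ∑ l, x l * u l := by
        rw [Finset.mul_sum]
        exact Finset.sum_congr rfl fun l _ => by simp only [Pi.smul_apply, smul_eq_mul]; ring
      rw [this]; ring
  have hMc : ∀ u, (LinearMap.toContinuousLinearMap M) u = M u := fun u => rfl
  refine ⟨(LinearMap.toContinuousLinearMap M).comp T', fun v => ?_, ?_⟩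
  · show M (T' v) = _
    rw [hM]
  -- the splitting identity
  have hsplit : ∀ y' x, Real.exp ((∑ l, x l * T y' l) - φ x)
      = Real.exp ((∑ l, x l * T y l) - φ x) * Real.exp (∑ l, x l * (T y' l - T y l)) := by
    intro y' x
    rw [← Real.exp_add]
    congr 1
    have : ∑ l, x l * (T y' l - T y l) = (∑ l, x l * T y' l) - ∑ l, x l * T y l := by
      rw [← Finset.sum_sub_distrib]
      exact Finset.sum_congr rfl fun l _ => by ring
    rw [this]; ring
  -- the remainder dominating function g and its integral Q
  set g : (Fin kk → ℝ) → (Fin d → ℝ) → ℝ := fun y' x =>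
    (1 + ‖x‖) * (d * ‖x‖) * |Real.exp ((∑ l, x l * T y' l) - φ x)
      - Real.exp ((∑ l, x l * T y l) - φ x)| with hg
  have hgnn : ∀ y' x, 0 ≤ g y' x := fun y' x => by rw [hg]; positivity
  have hgmeas : ∀ y', Measurable (g y') := fun y' =>
    ((measurable_const.add measurable_norm).mul (measurable_const.mul measurable_norm)).mul
      (((aux_measE hφ (T y')).sub (aux_measE hφ (T y))).abs)
  have hgbound : ∀ y' ∈ N, ∀ x, g y' x ≤ 2 * d * ψ x := by
    intro y' hy' x
    have h1 := hbd y' hy' x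
    have h2 := hbd y hyN x
    have e1 : |Real.exp ((∑ l, x l * T y' l) - φ x) - Real.exp ((∑ l, x l * T y l) - φ x)|
        ≤ Real.exp ((∑ l, x l * T y' l) - φ x) + Real.exp ((∑ l, x l * T y l) - φ x) := by
      rw [sub_eq_add_neg]
      refine (abs_add_le _ _).trans ?_
      rw [abs_neg, abs_of_pos (Real.exp_pos _), abs_of_pos (Real.exp_pos _)]
    rw [hg]
    have hS : (0:ℝ) ≤ Real.exp ((∑ l, x l * T y' l) - φ x)
        + Real.exp ((∑ l, x l * T y l) - φ x) := by positivity
    calc (1 + ‖x‖) * (d * ‖x‖) * |Real.exp ((∑ l, x l * T y' l) - φ x)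
          - Real.exp ((∑ l, x l * T y l) - φ x)|
        ≤ (1 + ‖x‖) * (d * ‖x‖) * (Real.exp ((∑ l, x l * T y' l) - φ x)
          + Real.exp ((∑ l, x l * T y l) - φ x)) := by
          exact mul_le_mul_of_nonneg_left e1 (by positivity)
      _ ≤ d * ((1 + ‖x‖)^2 * Real.exp ((∑ l, x l * T y' l) - φ x))
          + d * ((1 + ‖x‖)^2 * Real.exp ((∑ l, x l * T y l) - φ x)) := by
          nlinarith [norm_nonneg x, mul_nonneg (mul_nonneg hdnn hS) (norm_nonneg x),
            mul_nonneg hdnn hS]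
      _ ≤ d * ψ x + d * ψ x := by
          exact add_le_add (mul_le_mul_of_nonneg_left h1 hdnn) (mul_le_mul_of_nonneg_left h2 hdnn)
      _ = 2 * d * ψ x := by ring
  have hIg : ∀ y' ∈ N, Integrable (g y') μ := by
    intro y' hy'
    refine (hψ.const_mul (2 * d)).mono' (hgmeas y').aestronglyMeasurable
      (Eventually.of_forall fun x => ?_)
    rw [Real.norm_eq_abs, abs_of_nonneg (hgnn y' x)]
    exact hgbound y' hy' x
  set Q : (Fin kk → ℝ) → ℝ := fun y' => ∫ x, g y' x ∂μ with hQ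
  have hQnn : ∀ y', 0 ≤ Q y' := fun y' => integral_nonneg (hgnn y')
  have hQtend : Tendsto Q (nhds y) (nhds 0) := by
    have h0 : (0:ℝ) = ∫ _x : Fin d → ℝ, (0:ℝ) ∂μ := by simp
    rw [h0, hQ]
    apply tendsto_integral_filter_of_dominated_convergence (fun x => 2 * d * ψ x)
    · exact Eventually.of_forall fun y' => (hgmeas y').aestronglyMeasurable
    · filter_upwards [hN] with y' hy'
      exact Eventually.of_forall fun x => by
        rw [Real.norm_eq_abs, abs_of_nonneg (hgnn y' x)]; exact hgbound y' hy' x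
    · exact hψ.const_mul (2 * d)
    · refine Eventually.of_forall fun x => ?_
      have hc : Continuous fun θ : Fin d → ℝ => Real.exp ((∑ l, x l * θ l) - φ x) :=
        Real.continuous_exp.comp
          ((continuous_finset_sum _ fun l _ => continuous_const.mul (continuous_apply l)).sub
            continuous_const)
      have h1 : Tendsto (fun y' => Real.exp ((∑ l, x l * T y' l) - φ x)) (nhds y)
          (nhds (Real.exp ((∑ l, x l * T y l) - φ x))) := (hc.tendsto (T y)).comp hT.continuousAt
      have h2 : Tendsto (fun y' => (1 + ‖x‖) * (d * ‖x‖) *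
          |Real.exp ((∑ l, x l * T y' l) - φ x) - Real.exp ((∑ l, x l * T y l) - φ x)|)
          (nhds y) (nhds ((1 + ‖x‖) * (d * ‖x‖) *
          |Real.exp ((∑ l, x l * T y l) - φ x) - Real.exp ((∑ l, x l * T y l) - φ x)|)) :=
        ((h1.sub tendsto_const_nhds).abs).const_mul _
      simpa [hg] using h2
  -- pointwise bound on the remainder integrand
  have hptb : ∀ y' ∈ N, ∀ x,
      ‖(w x * Real.exp ((∑ l, x l * T y l) - φ x)) *
        (Real.exp (∑ l, x l * (T y' l - T y l)) - 1 - ∑ l, x l * (T y' l - T y l))‖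
      ≤ ‖T y' - T y‖ * g y' x := by
    intro y' hy' x
    have hE0 : (0:ℝ) < Real.exp ((∑ l, x l * T y l) - φ x) := Real.exp_pos _
    have habs : |∑ l, x l * (T y' l - T y l)| ≤ d * (‖x‖ * ‖T y' - T y‖) := by
      have := aux_ip_abs x (T y' - T y)
      simpa [Pi.sub_apply] using this
    have hkey : Real.exp ((∑ l, x l * T y l) - φ x) * |Real.exp (∑ l, x l * (T y' l - T y l)) - 1|
        = |Real.exp ((∑ l, x l * T y' l) - φ x) - Real.exp ((∑ l, x l * T y l) - φ x)| := by
      rw [← abs_of_pos hE0, ← abs_mul, mul_sub, mul_one, ← hsplit y' x, abs_of_pos hE0]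
    rw [Real.norm_eq_abs, abs_mul, abs_mul, abs_of_pos hE0]
    calc |w x| * Real.exp ((∑ l, x l * T y l) - φ x) *
          |Real.exp (∑ l, x l * (T y' l - T y l)) - 1 - ∑ l, x l * (T y' l - T y l)|
        ≤ ((1 + ‖x‖) * Real.exp ((∑ l, x l * T y l) - φ x)) *
          (|∑ l, x l * (T y' l - T y l)| * |Real.exp (∑ l, x l * (T y' l - T y l)) - 1|) := by
          exact mul_le_mul (mul_le_mul_of_nonneg_right (hwb x) hE0.le)
            (aux_exp_bound _) (abs_nonneg _) (by positivity)
      _ = ((1 + ‖x‖) * |∑ l, x l * (T y' l - T y l)|) *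
          (Real.exp ((∑ l, x l * T y l) - φ x) *
            |Real.exp (∑ l, x l * (T y' l - T y l)) - 1|) := by ring
      _ = ((1 + ‖x‖) * |∑ l, x l * (T y' l - T y l)|) *
          |Real.exp ((∑ l, x l * T y' l) - φ x) - Real.exp ((∑ l, x l * T y l) - φ x)| := by
          rw [hkey]
      _ ≤ ((1 + ‖x‖) * (d * (‖x‖ * ‖T y' - T y‖))) *
          |Real.exp ((∑ l, x l * T y' l) - φ x) - Real.exp ((∑ l, x l * T y l) - φ x)| := by
          exact mul_le_mul_of_nonneg_right
            (mul_le_mul_of_nonneg_left habs (by positivity)) (abs_nonneg _)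
      _ = ‖T y' - T y‖ * g y' x := by rw [hg]; ring
  -- remainder is little-o
  have hIO : (fun y' => ∫ x, (w x * Real.exp ((∑ l, x l * T y l) - φ x)) *
        (Real.exp (∑ l, x l * (T y' l - T y l)) - 1 - ∑ l, x l * (T y' l - T y l)) ∂μ)
      =O[nhds y] (fun y' => ‖T y' - T y‖ * Q y') := by
    rw [isBigO_iff]
    refine ⟨1, ?_⟩
    filter_upwards [hN] with y' hy'
    rw [one_mul]
    have hb : ‖∫ x, (w x * Real.exp ((∑ l, x l * T y l) - φ x)) *
        (Real.exp (∑ l, x l * (T y' l - T y l)) - 1 - ∑ l, x l * (T y' l - T y l)) ∂μ‖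
        ≤ ∫ x, ‖T y' - T y‖ * g y' x ∂μ := by
      refine norm_integral_le_of_norm_le ((hIg y' hy').const_mul _)
        (Eventually.of_forall fun x => hptb y' hy' x)
    rw [integral_const_mul] at hb
    exact hb.trans (le_abs_self _)
  have hprod : (fun y' => ‖T y' - T y‖ * Q y') =o[nhds y] fun y' => y' - y := by
    have h1 : (fun y' => ‖T y' - T y‖) =O[nhds y] fun y' => ‖y' - y‖ :=
      (hT.isBigO_sub).norm_norm
    have h2 : Q =o[nhds y] (fun _ => (1:ℝ)) := (isLittleO_one_iff ℝ).mpr hQtend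
    have h3 := h1.mul_isLittleO h2
    have h4 : (fun y' => ‖T y' - T y‖ * Q y') =o[nhds y] fun y' => ‖y' - y‖ := by
      simpa using h3
    exact h4.of_norm_right
  have hI1 : (fun y' => ∫ x, (w x * Real.exp ((∑ l, x l * T y l) - φ x)) *
        (Real.exp (∑ l, x l * (T y' l - T y l)) - 1 - ∑ l, x l * (T y' l - T y l)) ∂μ)
      =o[nhds y] fun y' => y' - y := hIO.trans_isLittleO hprod
  have h2 : (fun y' => M (T y' - T y - T' (y' - y))) =o[nhds y] fun y' => y' - y :=
    (((LinearMap.toContinuousLinearMap M).isBoundedLinearMap).isBigO_comp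
      (nhds y)).trans_isLittleO hT.isLittleO
  refine HasFDerivAt.of_isLittleO ?_
  refine (hI1.add h2).congr' ?_ (EventuallyEq.refl _ _)
  filter_upwards [hN] with y' hy'
  have ec : (fun x => (w x * Real.exp ((∑ l, x l * T y l) - φ x)) *
        (Real.exp (∑ l, x l * (T y' l - T y l)) - 1 - ∑ l, x l * (T y' l - T y l)))
      = fun x => (w x * Real.exp ((∑ l, x l * T y' l) - φ x))
        - (w x * Real.exp ((∑ l, x l * T y l) - φ x))
        - ((w x * ∑ l, x l * (T y' l - T y l)) * Real.exp ((∑ l, x l * T y l) - φ x)) := by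
    funext x
    rw [hsplit y' x]
    ring
  have hIip : Integrable (fun x => (w x * ∑ l, x l * (T y' l - T y l)) *
      Real.exp ((∑ l, x l * T y l) - φ x)) μ := by
    have := hIwip (T y' - T y)
    simpa [Pi.sub_apply] using this
  have e1 : ∫ x, (w x * Real.exp ((∑ l, x l * T y l) - φ x)) *
        (Real.exp (∑ l, x l * (T y' l - T y l)) - 1 - ∑ l, x l * (T y' l - T y l)) ∂μ
      = (∫ x, w x * Real.exp ((∑ l, x l * T y' l) - φ x) ∂μ)
        - (∫ x, w x * Real.exp ((∑ l, x l * T y l) - φ x) ∂μ)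
        - ∫ x, (w x * ∑ l, x l * (T y' l - T y l)) * Real.exp ((∑ l, x l * T y l) - φ x) ∂μ := by
    have hXY : Integrable (fun x => w x * Real.exp ((∑ l, x l * T y' l) - φ x)
        - w x * Real.exp ((∑ l, x l * T y l) - φ x)) μ := (hIw y' hy').sub (hIw y hyN)
    rw [ec, integral_sub hXY hIip, integral_sub (hIw y' hy') (hIw y hyN)]
  have e2 : M (T y' - T y) = ∫ x, (w x * ∑ l, x l * (T y' l - T y l)) *
      Real.exp ((∑ l, x l * T y l) - φ x) ∂μ := by
    rw [hM]
    simp [Pi.sub_apply]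
  have e3 : M (T y' - T y - T' (y' - y)) = M (T y' - T y) - M (T' (y' - y)) := map_sub M _ _
  show _ = _
  rw [e1, e3, e2]
  have : ((LinearMap.toContinuousLinearMap M).comp T') (y' - y) = M (T' (y' - y)) := rfl
  rw [this]
  ring

/-- Variance identity (Proposition 1):
`J_y E[X|Y=y] = (J_y T(y)) · Var(X | Y=y)` for the exponential family. -/
theorem stmt_3
    {d k : ℕ}
    (μ : Measure (Fin d → ℝ)) [IsProbabilityMeasure μ]
    (𝒴 : Set (Fin k → ℝ)) (h𝒴 : IsOpen 𝒴)
    (h : (Fin k → ℝ) → ℝ)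
    (hhpos : ∀ y ∈ 𝒴, 0 < h y)
    (hhdiff : ∀ y ∈ 𝒴, DifferentiableAt ℝ h y)
    (T : (Fin k → ℝ) → (Fin d → ℝ))
    (T' : (Fin k → ℝ) → ((Fin k → ℝ) →L[ℝ] (Fin d → ℝ)))
    (hT : ∀ y ∈ 𝒴, HasFDerivAt T (T' y) y)
    (φ : (Fin d → ℝ) → ℝ) (hφ : Measurable φ)
    (f : (Fin k → ℝ) → (Fin d → ℝ) → ℝ)
    (hf : ∀ y x, f y x = h y * Real.exp ((∑ l, x l * T y l) - φ x))
    (fY : (Fin k → ℝ) → ℝ)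
    (hfY : ∀ y, fY y = ∫ x, f y x ∂μ)
    (hfYpos : ∀ y ∈ 𝒴, 0 < fY y)
    (hfYfin : ∀ y ∈ 𝒴, Integrable (fun x => f y x) μ)
    (F : (Fin k → ℝ) → (Fin d → ℝ))
    (hF : ∀ y i, F y i = (∫ x, x i * f y x ∂μ) / fY y)
    (hdom : ∀ y ∈ 𝒴, ∃ N ∈ nhds y, ∃ ψ : (Fin d → ℝ) → ℝ, Integrable ψ μ ∧
      ∀ y' ∈ N, ∀ x,
        (1 + ‖x‖) ^ 2 * Real.exp ((∑ l, x l * T y' l) - φ x) ≤ ψ x) :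
    ∀ y ∈ 𝒴,
      DifferentiableAt ℝ F y ∧
      ∀ (i : Fin d) (j : Fin k),
        fderiv ℝ F y (Pi.single j 1) i =
          ∑ l, (T' y (Pi.single j 1) l) *
            ((∫ x, x l * x i * f y x ∂μ) / fY y
              - ((∫ x, x l * f y x ∂μ) / fY y)
                * ((∫ x, x i * f y x ∂μ) / fY y)) := by
  intro y hy
  obtain ⟨N, hN, ψ, hψ, hb⟩ := hdom y hy
  have hyN : y ∈ N := mem_of_mem_nhds hN
  have hby : ∀ x, (1 + ‖x‖) ^ 2 * Real.exp ((∑ l, x l * T y l) - φ x) ≤ ψ x := hb y hyN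
  have hTy := hT y hy
  -- derivative of the denominator-type integral
  obtain ⟨DA, hDAv0, hDA0⟩ := key μ φ hφ T (T' y) y hTy N hN ψ hψ hb (fun _ => (1:ℝ))
    measurable_const (fun x => by rw [abs_one]; linarith [norm_nonneg x])
  have hDAv : ∀ v, DA v
      = ∫ x, 1 * (∑ l, x l * T' y v l) * Real.exp ((∑ l, x l * T y l) - φ x) ∂μ := hDAv0
  have hDA : HasFDerivAt
      (fun y' => ∫ x, 1 * Real.exp ((∑ l, x l * T y' l) - φ x) ∂μ) DA y := hDA0
  -- derivative of the numerator-type integrals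
  have hGex : ∀ i : Fin d, ∃ D : (Fin k → ℝ) →L[ℝ] ℝ,
      (∀ v, D v = ∫ x, x i * (∑ l, x l * T' y v l) *
        Real.exp ((∑ l, x l * T y l) - φ x) ∂μ) ∧
      HasFDerivAt (fun y' => ∫ x, x i * Real.exp ((∑ l, x l * T y' l) - φ x) ∂μ) D y := by
    intro i
    obtain ⟨D, h1, h2⟩ := key μ φ hφ T (T' y) y hTy N hN ψ hψ hb (fun x => x i)
      (measurable_pi_apply i)
      (fun x => by
        have h3 : |x i| ≤ ‖x‖ := by
          simpa [Real.norm_eq_abs] using norm_le_pi_norm x i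
        linarith)
    exact ⟨D, h1, h2⟩
  choose DG hDGv hDG using hGex
  -- fY in terms of the plain integral
  have hpull : ∀ y' ∈ 𝒴, ∀ p : (Fin d → ℝ) → ℝ,
      ∫ x, p x * f y' x ∂μ = h y' * ∫ x, p x * Real.exp ((∑ l, x l * T y' l) - φ x) ∂μ := by
    intro y' hy' p
    rw [← integral_const_mul]
    refine integral_congr_ae (Eventually.of_forall fun x => ?_)
    simp only [hf]; ring
  have hfYA : ∀ y' ∈ 𝒴,
      fY y' = h y' * ∫ x, 1 * Real.exp ((∑ l, x l * T y' l) - φ x) ∂μ := by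
    intro y' hy'
    rw [hfY, ← hpull y' hy' (fun _ => 1)]
    refine integral_congr_ae (Eventually.of_forall fun x => ?_)
    simp
  have hApos : ∀ y' ∈ 𝒴, 0 < ∫ x, 1 * Real.exp ((∑ l, x l * T y' l) - φ x) ∂μ := by
    intro y' hy'
    have h1 := hfYpos y' hy'
    rw [hfYA y' hy'] at h1
    nlinarith [hhpos y' hy']
  have hAne : (∫ x, 1 * Real.exp ((∑ l, x l * T y l) - φ x) ∂μ) ≠ 0 :=
    ne_of_gt (hApos y hy)
  -- derivative of the inverse
  have hinv : HasFDerivAt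
      (fun y' => (∫ x, 1 * Real.exp ((∑ l, x l * T y' l) - φ x) ∂μ)⁻¹)
      ((-((∫ x, 1 * Real.exp ((∑ l, x l * T y l) - φ x) ∂μ) ^ 2)⁻¹) • DA) y :=
    HasDerivAt.comp_hasFDerivAt y (hasDerivAt_inv hAne) hDA
  -- quotient derivative, componentwise
  have hdiv : ∀ i : Fin d, HasFDerivAt
      (fun y' => (∫ x, x i * Real.exp ((∑ l, x l * T y' l) - φ x) ∂μ) *
        (∫ x, 1 * Real.exp ((∑ l, x l * T y' l) - φ x) ∂μ)⁻¹)
      ((∫ x, x i * Real.exp ((∑ l, x l * T y l) - φ x) ∂μ) •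
          ((-((∫ x, 1 * Real.exp ((∑ l, x l * T y l) - φ x) ∂μ) ^ 2)⁻¹) • DA)
        + (∫ x, 1 * Real.exp ((∑ l, x l * T y l) - φ x) ∂μ)⁻¹ • DG i) y :=
    fun i => (hDG i).mul hinv
  have hFeq : (fun y' => fun i : Fin d =>
      (∫ x, x i * Real.exp ((∑ l, x l * T y' l) - φ x) ∂μ) *
        (∫ x, 1 * Real.exp ((∑ l, x l * T y' l) - φ x) ∂μ)⁻¹) =ᶠ[nhds y] F := by
    filter_upwards [h𝒴.mem_nhds hy] with y' hy'
    funext i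
    rw [hF y' i, hfYA y' hy', hpull y' hy' (fun x => x i),
      mul_div_mul_left _ _ (ne_of_gt (hhpos y' hy')), div_eq_mul_inv]
  have hFhas : HasFDerivAt F (ContinuousLinearMap.pi fun i =>
      (∫ x, x i * Real.exp ((∑ l, x l * T y l) - φ x) ∂μ) •
          ((-((∫ x, 1 * Real.exp ((∑ l, x l * T y l) - φ x) ∂μ) ^ 2)⁻¹) • DA)
        + (∫ x, 1 * Real.exp ((∑ l, x l * T y l) - φ x) ∂μ)⁻¹ • DG i) y :=
    (hasFDerivAt_pi.mpr hdiv).congr_of_eventuallyEq hFeq.symm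
  refine ⟨hFhas.differentiableAt, ?_⟩
  intro i j
  rw [hFhas.fderiv]
  simp only [ContinuousLinearMap.pi_apply, ContinuousLinearMap.add_apply,
    ContinuousLinearMap.coe_smul', Pi.smul_apply, smul_eq_mul]
  rw [hDAv, hDGv]
  -- sum exchange for the numerator integrals
  have hIl : ∀ (p : (Fin d → ℝ) → ℝ) (Cp : ℝ), Measurable p →
      (∀ x, |p x| ≤ Cp * (1 + ‖x‖) ^ 2) →
      Integrable (fun x => p x * Real.exp ((∑ l, x l * T y l) - φ x)) μ :=
    fun p Cp hp hbp => aux_integrable μ φ hφ (T y) ψ hψ hby p Cp hp hbp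
  have hIll : ∀ l i' : Fin d,
      Integrable (fun x => x l * x i' * Real.exp ((∑ l, x l * T y l) - φ x)) μ := by
    intro l i'
    refine hIl (fun x => x l * x i') 1 ((measurable_pi_apply l).mul (measurable_pi_apply i')) ?_
    intro x
    have h3 : |x l| ≤ ‖x‖ := by simpa [Real.norm_eq_abs] using norm_le_pi_norm x l
    have h4 : |x i'| ≤ ‖x‖ := by simpa [Real.norm_eq_abs] using norm_le_pi_norm x i'
    rw [abs_mul]
    nlinarith [abs_nonneg (x l), abs_nonneg (x i'), norm_nonneg x]
  have hIlone : ∀ l : Fin d,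
      Integrable (fun x => x l * Real.exp ((∑ l, x l * T y l) - φ x)) μ := by
    intro l
    refine hIl (fun x => x l) 1 (measurable_pi_apply l) ?_
    intro x
    have h3 : |x l| ≤ ‖x‖ := by simpa [Real.norm_eq_abs] using norm_le_pi_norm x l
    nlinarith [norm_nonneg x]
  have hswapG : ∫ x, x i * (∑ l, x l * T' y (Pi.single j 1) l) *
        Real.exp ((∑ l, x l * T y l) - φ x) ∂μ
      = ∑ l, T' y (Pi.single j 1) l * ∫ x, x l * x i *
        Real.exp ((∑ l, x l * T y l) - φ x) ∂μ := by
    have e : (fun x => x i * (∑ l, x l * T' y (Pi.single j 1) l) *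
          Real.exp ((∑ l, x l * T y l) - φ x))
        = fun x => ∑ l, T' y (Pi.single j 1) l *
          (x l * x i * Real.exp ((∑ l, x l * T y l) - φ x)) := by
      funext x
      rw [Finset.mul_sum, Finset.sum_mul]
      exact Finset.sum_congr rfl fun l _ => by ring
    rw [e, integral_finset_sum _ (fun l _ => (hIll l i).const_mul _)]
    exact Finset.sum_congr rfl fun l _ => integral_const_mul _ _
  have hswapA : ∫ x, 1 * (∑ l, x l * T' y (Pi.single j 1) l) *
        Real.exp ((∑ l, x l * T y l) - φ x) ∂μ
      = ∑ l, T' y (Pi.single j 1) l * ∫ x, x l *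
        Real.exp ((∑ l, x l * T y l) - φ x) ∂μ := by
    have e : (fun x => 1 * (∑ l, x l * T' y (Pi.single j 1) l) *
          Real.exp ((∑ l, x l * T y l) - φ x))
        = fun x => ∑ l, T' y (Pi.single j 1) l *
          (x l * Real.exp ((∑ l, x l * T y l) - φ x)) := by
      funext x
      rw [Finset.mul_sum, Finset.sum_mul]
      exact Finset.sum_congr rfl fun l _ => by ring
    rw [e, integral_finset_sum _ (fun l _ => (hIlone l).const_mul _)]
    exact Finset.sum_congr rfl fun l _ => integral_const_mul _ _
  rw [hswapG, hswapA]
  -- rewrite RHS integrals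
  have hRHS : ∀ l : Fin d, (∫ x, x l * x i * f y x ∂μ) / fY y
        - ((∫ x, x l * f y x ∂μ) / fY y) * ((∫ x, x i * f y x ∂μ) / fY y)
      = (∫ x, x l * x i * Real.exp ((∑ l, x l * T y l) - φ x) ∂μ) /
          (∫ x, 1 * Real.exp ((∑ l, x l * T y l) - φ x) ∂μ)
        - ((∫ x, x l * Real.exp ((∑ l, x l * T y l) - φ x) ∂μ) /
            (∫ x, 1 * Real.exp ((∑ l, x l * T y l) - φ x) ∂μ)) *
          ((∫ x, x i * Real.exp ((∑ l, x l * T y l) - φ x) ∂μ) /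
            (∫ x, 1 * Real.exp ((∑ l, x l * T y l) - φ x) ∂μ)) := by
    intro l
    have hhne := ne_of_gt (hhpos y hy)
    rw [hfYA y hy, hpull y hy (fun x => x l * x i), hpull y hy (fun x => x l),
      hpull y hy (fun x => x i), mul_div_mul_left _ _ hhne, mul_div_mul_left _ _ hhne,
      mul_div_mul_left _ _ hhne]
  simp only [hRHS]
  -- final algebra
  simp only [Finset.mul_sum]
  rw [← Finset.sum_add_distrib]
  refine Finset.sum_congr rfl fun l _ => ?_
  field_simp
  ring
end

section
/- (Moment recursion, Proposition 2.) In the univariate exponential-family setup of the context, for every integer ℓ ≥ 1 the function F_ℓ is differentiable on 𝒴 and for all y ∈ 𝒴: F_{ℓ+1}(y) = F_ℓ'(y)/T'(y) + F_1(y)·F_ℓ(y), where F_ℓ(y) = E[X^ℓ | Y = y] is the ℓ-th posterior moment. -/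
open MeasureTheory

lemma aux_deriv (ν : Measure ℝ) [IsFiniteMeasure ν] (I : Set ℝ) (hIopen : IsOpen I)
    (hint : ∀ s ∈ I, ∀ j : ℕ, Integrable (fun x => |x| ^ j * Real.exp (x * s)) ν)
    (ℓ : ℕ) (s : ℝ) (hs : s ∈ I) :
    HasDerivAt (fun t => ∫ x, x ^ ℓ * Real.exp (x * t) ∂ν)
      (∫ x, x ^ (ℓ + 1) * Real.exp (x * s) ∂ν) s := by
  obtain ⟨ε, εpos, hball⟩ := Metric.isOpen_iff.1 hIopen s hs
  set a := s - ε / 2 with ha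
  set b := s + ε / 2 with hb
  have haI : a ∈ I := hball (by
    rw [Metric.mem_ball, Real.dist_eq, ha,
      show s - ε / 2 - s = -(ε / 2) by ring, abs_neg, abs_of_nonneg (by linarith)]
    linarith)
  have hbI : b ∈ I := hball (by
    rw [Metric.mem_ball, Real.dist_eq, hb,
      show s + ε / 2 - s = ε / 2 by ring, abs_of_nonneg (by linarith)]
    linarith)
  have meas : ∀ j : ℕ, ∀ t : ℝ,
      AEStronglyMeasurable (fun x : ℝ => x ^ j * Real.exp (x * t)) ν := by
    intro j t
    exact ((continuous_pow j).mul (Real.continuous_exp.comp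
      (continuous_id.mul continuous_const))).aestronglyMeasurable
  have int : ∀ j : ℕ, ∀ t ∈ I, Integrable (fun x : ℝ => x ^ j * Real.exp (x * t)) ν := by
    intro j t ht
    refine (hint t ht j).mono' (meas j t) ?_
    filter_upwards with x
    rw [Real.norm_eq_abs, abs_mul, abs_pow, Real.abs_exp]
  have key := hasDerivAt_integral_of_dominated_loc_of_deriv_le (μ := ν)
    (F := fun t x => x ^ ℓ * Real.exp (x * t))
    (F' := fun t x => x ^ (ℓ + 1) * Real.exp (x * t))
    (bound := fun x => |x| ^ (ℓ + 1) * (Real.exp (x * a) + Real.exp (x * b)))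
    (Metric.ball_mem_nhds s (half_pos εpos))
    (Filter.Eventually.of_forall fun t => meas ℓ t)
    (int ℓ s hs)
    (meas (ℓ + 1) s)
    ?_ ?_ ?_
  · exact key.2
  · filter_upwards with x
    intro t ht
    rw [Metric.mem_ball, Real.dist_eq] at ht
    obtain ⟨hl, hr⟩ := abs_lt.1 ht
    have h1 : a ≤ t := by rw [ha]; linarith
    have h2 : t ≤ b := by rw [hb]; linarith
    rw [Real.norm_eq_abs, abs_mul, abs_pow, Real.abs_exp, mul_comm]
    rw [mul_comm (|x| ^ (ℓ + 1))]
    apply mul_le_mul_of_nonneg_right _ (pow_nonneg (abs_nonneg x) _)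
    rcases le_total 0 x with hx | hx
    · calc Real.exp (x * t) ≤ Real.exp (x * b) :=
            Real.exp_le_exp.2 (mul_le_mul_of_nonneg_left h2 hx)
        _ ≤ _ := le_add_of_nonneg_left (Real.exp_pos _).le
    · calc Real.exp (x * t) ≤ Real.exp (x * a) :=
            Real.exp_le_exp.2 (mul_le_mul_of_nonpos_left h1 hx)
        _ ≤ _ := le_add_of_nonneg_right (Real.exp_pos _).le
  · have := (hint a haI (ℓ + 1)).add (hint b hbI (ℓ + 1))
    refine this.congr ?_
    filter_upwards with x
    simp only [Pi.add_apply]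
    ring
  · filter_upwards with x
    intro t ht
    have h1 : HasDerivAt (fun t => x * t) x t := by
      simpa using (hasDerivAt_id t).const_mul x
    have h2 : HasDerivAt (fun t => Real.exp (x * t)) (Real.exp (x * t) * x) t :=
      (Real.hasDerivAt_exp (x * t)).comp t h1
    have h3 := h2.const_mul (x ^ ℓ)
    convert h3 using 1
    case e'_9 => ring
    case e'_4 => rfl

/-- Moment recursion (Proposition 2):
`F_{ℓ+1}(y) = F_ℓ'(y)/T'(y) + F_1(y) F_ℓ(y)` for the posterior moments of a
univariate exponential family. -/
theorem stmt_5
    (ν : Measure ℝ) [IsFiniteMeasure ν] (hν : ν ≠ 0)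
    (𝒴 : Set ℝ) (h𝒴open : IsOpen 𝒴) (h𝒴conn : 𝒴.OrdConnected)
    (T T' : ℝ → ℝ)
    (hT : ∀ y ∈ 𝒴, HasDerivAt T (T' y) y)
    (hT' : ∀ y ∈ 𝒴, T' y ≠ 0)
    (I : Set ℝ) (hIopen : IsOpen I) (hIconn : I.OrdConnected)
    (hTI : ∀ y ∈ 𝒴, T y ∈ I)
    (hint : ∀ s ∈ I, ∀ j : ℕ, Integrable (fun x => |x| ^ j * Real.exp (x * s)) ν)
    (G : ℕ → ℝ → ℝ)
    (hG : ∀ ℓ y, G ℓ y = ∫ x, x ^ ℓ * Real.exp (x * T y) ∂ν)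
    (hG0 : ∀ y ∈ 𝒴, 0 < G 0 y)
    (F : ℕ → ℝ → ℝ)
    (hF : ∀ ℓ y, F ℓ y = G ℓ y / G 0 y) :
    ∀ ℓ : ℕ, 1 ≤ ℓ → ∀ y ∈ 𝒴,
      DifferentiableAt ℝ (F ℓ) y ∧
      F (ℓ + 1) y = deriv (F ℓ) y / T' y + F 1 y * F ℓ y := by
  intro ℓ hℓ y hy
  have hGy : ∀ m : ℕ, HasDerivAt (G m) (G (m + 1) y * T' y) y := by
    intro m
    have hH : HasDerivAt (fun t => ∫ x, x ^ m * Real.exp (x * t) ∂ν)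
        (∫ x, x ^ (m + 1) * Real.exp (x * T y) ∂ν) (T y) :=
      aux_deriv ν I hIopen hint m (T y) (hTI y hy)
    have := hH.comp y (hT y hy)
    have hfun : G m = fun z => ∫ x, x ^ m * Real.exp (x * T z) ∂ν := funext (hG m)
    rw [hfun, hG (m + 1) y]
    exact this
  have hG0ne : G 0 y ≠ 0 := (hG0 y hy).ne'
  have hFd : HasDerivAt (F ℓ)
      ((G (ℓ + 1) y * T' y * G 0 y - G ℓ y * (G 1 y * T' y)) / (G 0 y) ^ 2) y := by
    have := (hGy ℓ).div (hGy 0) hG0ne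
    have hfun : F ℓ = fun z => G ℓ z / G 0 z := funext (hF ℓ)
    rw [hfun]
    exact this
  refine ⟨hFd.differentiableAt, ?_⟩
  rw [hFd.deriv, hF (ℓ + 1) y, hF 1 y, hF ℓ y]
  field_simp [hT' y hy]
  ring
end

section
/- (Key recursion in the proof of Theorem 3.) In the univariate exponential-family setup of the context, fix a ∈ 𝒴, set A(y) = ∫_a^y T'(u) F_1(u) du, and for each integer ℓ ≥ 1 define g_ℓ(y) = F_ℓ(y) e^{A(y)}. Then for every ℓ ≥ 1, g_ℓ is differentiable on 𝒴 and T'(y)·g_{ℓ+1}(y) = g_ℓ'(y) for all y ∈ 𝒴; consequently g_{ℓ+1} = D^{(ℓ)} g_1, where D^{(ℓ)} is the operator with D^{(0)}u = u and D^{(ℓ+1)}u = (1/T')·(D^{(ℓ)}u)'. -/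
open MeasureTheory Metric

lemma exp_le_add_of_mem_ball {x s t ε : ℝ} (ht : t ∈ ball s ε) :
    Real.exp (x * t) ≤ Real.exp (x * (s - ε)) + Real.exp (x * (s + ε)) := by
  rcases le_total x 0 with hx | hx
  · have h1 : x * t ≤ x * (s - ε) := by nlinarith [abs_lt.mp (mem_ball_iff_norm.mp ht)]
    calc Real.exp (x * t) ≤ Real.exp (x * (s - ε)) := Real.exp_le_exp.mpr h1
      _ ≤ _ := le_add_of_nonneg_right (Real.exp_pos _).le
  · have h1 : x * t ≤ x * (s + ε) := by nlinarith [abs_lt.mp (mem_ball_iff_norm.mp ht)]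
    calc Real.exp (x * t) ≤ Real.exp (x * (s + ε)) := Real.exp_le_exp.mpr h1
      _ ≤ _ := le_add_of_nonneg_left (Real.exp_pos _).le

lemma integrable_pow_exp {ν : Measure ℝ} {I : Set ℝ}
    (hint : ∀ s ∈ I, ∀ j : ℕ, Integrable (fun x => |x| ^ j * Real.exp (x * s)) ν)
    {s : ℝ} (hs : s ∈ I) (j : ℕ) :
    Integrable (fun x : ℝ => x ^ j * Real.exp (x * s)) ν := by
  refine (hint s hs j).mono' ?_ ?_
  · exact ((continuous_pow j).mul (by fun_prop)).aestronglyMeasurable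
  · refine Filter.Eventually.of_forall fun x => ?_
    rw [Real.norm_eq_abs, abs_mul, abs_pow, abs_of_pos (Real.exp_pos _)]

lemma Hderiv {ν : Measure ℝ} {I : Set ℝ} (hIopen : IsOpen I)
    (hint : ∀ s ∈ I, ∀ j : ℕ, Integrable (fun x => |x| ^ j * Real.exp (x * s)) ν)
    (ℓ : ℕ) {s : ℝ} (hs : s ∈ I) :
    HasDerivAt (fun t => ∫ x, x ^ ℓ * Real.exp (x * t) ∂ν)
      (∫ x, x ^ (ℓ + 1) * Real.exp (x * s) ∂ν) s := by
  obtain ⟨ε, hε, hball⟩ := nhds_basis_closedBall.mem_iff.mp (hIopen.mem_nhds hs)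
  have hsm : s - ε ∈ I := hball (by simp [mem_closedBall_iff_norm, abs_of_pos hε])
  have hsp : s + ε ∈ I := hball (by simp [mem_closedBall_iff_norm, abs_of_pos hε])
  refine (hasDerivAt_integral_of_dominated_loc_of_deriv_le (F := fun t x => x ^ ℓ * Real.exp (x * t))
    (F' := fun t x => x ^ (ℓ + 1) * Real.exp (x * t))
    (bound := fun x => |x| ^ (ℓ + 1) * (Real.exp (x * (s - ε)) + Real.exp (x * (s + ε))))
    (ball_mem_nhds s hε) ?_ (integrable_pow_exp hint hs ℓ) ?_ ?_ ?_ ?_).2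
  · exact Filter.Eventually.of_forall fun t =>
      ((continuous_pow ℓ).mul (by fun_prop)).aestronglyMeasurable
  · exact ((continuous_pow (ℓ + 1)).mul (by fun_prop)).aestronglyMeasurable
  · refine Filter.Eventually.of_forall fun x => fun t ht => ?_
    rw [Real.norm_eq_abs, abs_mul, abs_pow, abs_of_pos (Real.exp_pos _)]
    exact mul_le_mul_of_nonneg_left (exp_le_add_of_mem_ball ht) (by positivity)
  · have : (fun x : ℝ => |x| ^ (ℓ + 1) * (Real.exp (x * (s - ε)) + Real.exp (x * (s + ε))))
        = fun x => |x| ^ (ℓ + 1) * Real.exp (x * (s - ε)) + |x| ^ (ℓ + 1) * Real.exp (x * (s + ε)) := by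
      funext x; ring
    rw [this]
    exact (hint _ hsm (ℓ + 1)).add (hint _ hsp (ℓ + 1))
  · refine Filter.Eventually.of_forall fun x => fun t ht => ?_
    have h1 : HasDerivAt (fun t => x * t) x t := by simpa using (hasDerivAt_id t).const_mul x
    have h2 : HasDerivAt (fun t => Real.exp (x * t)) (Real.exp (x * t) * x) t := h1.exp
    have := h2.const_mul (x ^ ℓ)
    convert this using 1
    case e'_9 => ring
    case e'_4 => rfl

/-- The operator `D^{(ℓ)}`: `D^{(0)} u = u` and `D^{(ℓ+1)} u = (1/T')·(D^{(ℓ)} u)'`. -/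
noncomputable def Dop (T' : ℝ → ℝ) : ℕ → (ℝ → ℝ) → (ℝ → ℝ)
  | 0, u => u
  | ℓ + 1, u => fun y => deriv (Dop T' ℓ u) y / T' y

/-- Key recursion in the proof of Theorem 3: with `g_ℓ(y) = F_ℓ(y) e^{A(y)}`,
one has `T'(y) g_{ℓ+1}(y) = g_ℓ'(y)`, hence `g_{ℓ+1} = D^{(ℓ)} g_1`. -/
theorem stmt_7
    (ν : Measure ℝ) [IsFiniteMeasure ν] (hν : ν ≠ 0)
    (𝒴 : Set ℝ) (h𝒴open : IsOpen 𝒴) (h𝒴conn : 𝒴.OrdConnected)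
    (T T' : ℝ → ℝ)
    (hT : ∀ y ∈ 𝒴, HasDerivAt T (T' y) y)
    (hT' : ∀ y ∈ 𝒴, T' y ≠ 0)
    (I : Set ℝ) (hIopen : IsOpen I) (hIconn : I.OrdConnected)
    (hTI : ∀ y ∈ 𝒴, T y ∈ I)
    (hint : ∀ s ∈ I, ∀ j : ℕ, Integrable (fun x => |x| ^ j * Real.exp (x * s)) ν)
    (G : ℕ → ℝ → ℝ)
    (hG : ∀ ℓ y, G ℓ y = ∫ x, x ^ ℓ * Real.exp (x * T y) ∂ν)
    (hG0 : ∀ y ∈ 𝒴, 0 < G 0 y)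
    (F : ℕ → ℝ → ℝ)
    (hF : ∀ ℓ y, F ℓ y = G ℓ y / G 0 y)
    (a : ℝ) (ha : a ∈ 𝒴)
    (A : ℝ → ℝ)
    (hA : ∀ y, A y = ∫ u in a..y, T' u * F 1 u)
    (g : ℕ → ℝ → ℝ)
    (hg : ∀ ℓ y, g ℓ y = F ℓ y * Real.exp (A y)) :
    ∀ ℓ : ℕ, 1 ≤ ℓ → ∀ y ∈ 𝒴,
      DifferentiableAt ℝ (g ℓ) y ∧
      T' y * g (ℓ + 1) y = deriv (g ℓ) y ∧
      g (ℓ + 1) y = Dop T' ℓ (g 1) y := by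
  -- Step 1: derivative of G ℓ
  have Gderiv : ∀ ℓ : ℕ, ∀ y ∈ 𝒴, HasDerivAt (G ℓ) (T' y * G (ℓ + 1) y) y := by
    intro ℓ y hy
    have hGfun : G ℓ = fun z => (fun t => ∫ x, x ^ ℓ * Real.exp (x * t) ∂ν) (T z) :=
      funext fun z => hG ℓ z
    rw [hGfun, hG (ℓ + 1) y]
    have h := (Hderiv hIopen hint ℓ (hTI y hy)).comp y (hT y hy)
    rw [mul_comm] at h
    exact h
  -- Step 2: for y ∈ 𝒴, the interval [a, y] lies in 𝒴 and T' is interval integrable there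
  have hS : ∀ y ∈ 𝒴, Set.uIcc a y ⊆ 𝒴 := fun y hy => h𝒴conn.uIcc_subset ha hy
  have hsign : ∀ y ∈ 𝒴, (∀ u ∈ Set.uIcc a y, 0 < T' u) ∨ (∀ u ∈ Set.uIcc a y, T' u < 0) := by
    intro y hy
    by_contra hcon
    push_neg at hcon
    obtain ⟨⟨u, hu, hu'⟩, ⟨v, hv, hv'⟩⟩ := hcon
    have hu0 : T' u < 0 := lt_of_le_of_ne hu' (hT' u (hS y hy hu))
    have hv0 : 0 < T' v := lt_of_le_of_ne hv' (Ne.symm (hT' v (hS y hy hv)))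
    have hOC : (T' '' Set.uIcc a y).OrdConnected :=
      Set.ordConnected_uIcc.image_hasDerivWithinAt
        (fun x hx => (hT x (hS y hy hx)).hasDerivWithinAt)
    have h0 : (0 : ℝ) ∈ T' '' Set.uIcc a y :=
      hOC.out (Set.mem_image_of_mem T' hu) (Set.mem_image_of_mem T' hv) ⟨hu0.le, hv0.le⟩
    obtain ⟨w, hw, hw0⟩ := h0
    exact hT' w (hS y hy hw) hw0
  have hIIT' : ∀ y ∈ 𝒴, IntervalIntegrable T' MeasureTheory.volume a y := by
    intro y hy
    have hcont : ContinuousOn T (Set.uIcc a y) :=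
      fun u hu => (hT u (hS y hy hu)).continuousAt.continuousWithinAt
    have hIoo : Set.Ioo (min a y) (max a y) ⊆ Set.uIcc a y := by
      rw [Set.uIcc_eq_union]
      intro u hu
      rcases le_total a y with hab | hab
      · simp only [min_eq_left hab, max_eq_right hab] at hu
        exact Set.subset_union_left (Set.Ioo_subset_Icc_self hu)
      · simp only [min_eq_right hab, max_eq_left hab] at hu
        exact Set.subset_union_right (Set.Ioo_subset_Icc_self hu)
    rcases hsign y hy with hpos | hneg
    · exact intervalIntegral.intervalIntegrable_deriv_of_nonneg hcont
        (fun u hu => hT u (hS y hy (hIoo hu))) (fun u hu => (hpos u (hIoo hu)).le)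
    · have hneg' : IntervalIntegrable (fun u => -T' u) MeasureTheory.volume a y :=
        intervalIntegral.intervalIntegrable_deriv_of_nonneg (g := fun u => -T u)
          (fun u hu => ((hT u (hS y hy hu)).continuousAt.neg).continuousWithinAt)
          (fun u hu => (hT u (hS y hy (hIoo hu))).neg)
          (fun u hu => neg_nonneg.mpr (hneg u (hIoo hu)).le)
      have h2 := hneg'.neg
      have he : (-fun u => -T' u) = T' := by funext u; simp
      rwa [he] at h2
  -- Step 3: continuity of F 1 on 𝒴
  have hFcont : ∀ u ∈ 𝒴, ContinuousAt (F 1) u := by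
    intro u hu
    have : F 1 = fun z => G 1 z / G 0 z := funext fun z => hF 1 z
    rw [this]
    exact ((Gderiv 1 u hu).continuousAt).div ((Gderiv 0 u hu).continuousAt) (hG0 u hu).ne'
  -- Step 4: derivative of log (G 0)
  have Lderiv : ∀ u ∈ 𝒴, HasDerivAt (fun z => Real.log (G 0 z)) (T' u * F 1 u) u := by
    intro u hu
    have h := (Gderiv 0 u hu).log (hG0 u hu).ne'
    have : T' u * G 1 u / G 0 u = T' u * F 1 u := by rw [hF 1 u, mul_div_assoc]
    rwa [this] at h
  -- Step 5: A y = log (G 0 y) - log (G 0 a)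
  have hAy : ∀ y ∈ 𝒴, A y = Real.log (G 0 y) - Real.log (G 0 a) := by
    intro y hy
    rw [hA]
    exact intervalIntegral.integral_eq_sub_of_hasDerivAt
      (fun u hu => Lderiv u (hS y hy hu))
      ((hIIT' y hy).mul_continuousOn
        (fun u hu => (hFcont u (hS y hy hu)).continuousWithinAt))
  have hexpA : ∀ y ∈ 𝒴, Real.exp (A y) = G 0 y / G 0 a := by
    intro y hy
    rw [hAy y hy, Real.exp_sub, Real.exp_log (hG0 y hy), Real.exp_log (hG0 a ha)]
  -- Step 6: g ℓ y = G ℓ y / G 0 a on 𝒴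
  have ggeq : ∀ ℓ : ℕ, ∀ y ∈ 𝒴, g ℓ y = G ℓ y / G 0 a := by
    intro ℓ y hy
    rw [hg, hF, hexpA y hy]
    field_simp [(hG0 y hy).ne']
  have gderiv : ∀ ℓ : ℕ, ∀ y ∈ 𝒴, HasDerivAt (g ℓ) (T' y * g (ℓ + 1) y) y := by
    intro ℓ y hy
    have h1 : HasDerivAt (fun z => G ℓ z / G 0 a) (T' y * G (ℓ + 1) y / G 0 a) y :=
      (Gderiv ℓ y hy).div_const _
    have heq : g ℓ =ᶠ[nhds y] fun z => G ℓ z / G 0 a := by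
      filter_upwards [h𝒴open.mem_nhds hy] with z hz
      exact ggeq ℓ z hz
    have h2 := h1.congr_of_eventuallyEq heq
    have : T' y * G (ℓ + 1) y / G 0 a = T' y * g (ℓ + 1) y := by
      rw [ggeq (ℓ + 1) y hy, mul_div_assoc]
    rwa [this] at h2
  -- Step 7: the Dop identity by induction
  have hDop : ∀ ℓ : ℕ, ∀ y ∈ 𝒴, Dop T' ℓ (g 1) y = g (ℓ + 1) y := by
    intro ℓ
    induction ℓ with
    | zero => intro y hy; rfl
    | succ n ih =>
      intro y hy
      show deriv (Dop T' n (g 1)) y / T' y = g (n + 2) y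
      have hd : deriv (Dop T' n (g 1)) y = deriv (g (n + 1)) y := by
        apply Filter.EventuallyEq.deriv_eq
        filter_upwards [h𝒴open.mem_nhds hy] with z hz
        exact ih z hz
      rw [hd, (gderiv (n + 1) y hy).deriv, mul_div_cancel_left₀ _ (hT' y hy)]
  intro ℓ _ y hy
  exact ⟨(gderiv ℓ y hy).differentiableAt, ((gderiv ℓ y hy).deriv).symm, (hDop ℓ y hy).symm⟩
end

section
/- (Tweedie's formula, univariate exponential family.) In the univariate exponential-family setup of the context, G_0 is differentiable on 𝒴 and for every y ∈ 𝒴: T'(y) · E[X | Y = y] = T'(y) F_1(y) = G_0'(y)/G_0(y) = d/dy log G_0(y). (Since G_0(y) = f_Y(y)/h(y), this is T'(y) E[X|Y=y] = d/dy log( f_Y(y)/h(y) ).) -/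
open MeasureTheory

lemma aux_hasDerivAt_int (ν : Measure ℝ) [IsFiniteMeasure ν]
    (I : Set ℝ) (hIopen : IsOpen I)
    (hint : ∀ s ∈ I, ∀ j : ℕ, Integrable (fun x => |x| ^ j * Real.exp (x * s)) ν)
    {s : ℝ} (hs : s ∈ I) :
    HasDerivAt (fun t => ∫ x, Real.exp (x * t) ∂ν) (∫ x, x * Real.exp (x * s) ∂ν) s := by
  obtain ⟨ε, hε, hball⟩ := Metric.isOpen_iff.1 hIopen s hs
  have hε2 : (0:ℝ) < ε / 2 := by positivity
  have ha : s - ε / 2 ∈ I := hball (by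
    simp only [Metric.mem_ball, Real.dist_eq, abs_lt]; constructor <;> linarith)
  have hb : s + ε / 2 ∈ I := hball (by
    simp only [Metric.mem_ball, Real.dist_eq, abs_lt]; constructor <;> linarith)
  have key := hasDerivAt_integral_of_dominated_loc_of_deriv_le
    (F := fun t x => Real.exp (x * t)) (F' := fun t x => x * Real.exp (x * t))
    (bound := fun x => |x| * (Real.exp (x * (s - ε / 2)) + Real.exp (x * (s + ε / 2))))
    (s := Metric.ball s (ε / 2)) (Metric.ball_mem_nhds s hε2)
    (Filter.Eventually.of_forall fun t =>
      (Continuous.aestronglyMeasurable (by continuity)))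
    (by simpa using hint s hs 0)
    (Continuous.aestronglyMeasurable (by continuity))
    (Filter.Eventually.of_forall fun x => by
      intro t ht
      have ht' : |t - s| < ε / 2 := by simpa [Real.dist_eq] using ht
      have h1 : Real.exp (x * t) ≤
          Real.exp (x * (s - ε / 2)) + Real.exp (x * (s + ε / 2)) := by
        rcases le_or_gt 0 x with hx | hx
        · have : x * t ≤ x * (s + ε / 2) := by nlinarith [abs_lt.1 ht']
          calc Real.exp (x * t) ≤ Real.exp (x * (s + ε / 2)) := Real.exp_le_exp.2 this
            _ ≤ _ := le_add_of_nonneg_left (Real.exp_pos _).le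
        · have : x * t ≤ x * (s - ε / 2) := by nlinarith [abs_lt.1 ht']
          calc Real.exp (x * t) ≤ Real.exp (x * (s - ε / 2)) := Real.exp_le_exp.2 this
            _ ≤ _ := le_add_of_nonneg_right (Real.exp_pos _).le
      calc ‖x * Real.exp (x * t)‖ = |x| * Real.exp (x * t) := by
            rw [norm_mul, Real.norm_eq_abs, Real.norm_eq_abs, abs_of_pos (Real.exp_pos _)]
        _ ≤ _ := by
            exact mul_le_mul_of_nonneg_left h1 (abs_nonneg x))
    (by
      have h := (hint _ ha 1).add (hint _ hb 1)
      simpa [pow_one, mul_add, Pi.add_def] using h)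
    (Filter.Eventually.of_forall fun x t _ => by
      simpa [mul_comm] using ((hasDerivAt_id t).const_mul x).exp)
  exact key.2

/-- Tweedie's formula for the univariate exponential family:
`T'(y) E[X|Y=y] = G_0'(y)/G_0(y) = (log G_0)'(y)`, where `G_0 = f_Y/h`. -/
theorem stmt_9
    (ν : Measure ℝ) [IsFiniteMeasure ν] (hν : ν ≠ 0)
    (𝒴 : Set ℝ) (h𝒴open : IsOpen 𝒴) (h𝒴conn : 𝒴.OrdConnected)
    (T T' : ℝ → ℝ)
    (hT : ∀ y ∈ 𝒴, HasDerivAt T (T' y) y)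
    (hT' : ∀ y ∈ 𝒴, T' y ≠ 0)
    (I : Set ℝ) (hIopen : IsOpen I) (hIconn : I.OrdConnected)
    (hTI : ∀ y ∈ 𝒴, T y ∈ I)
    (hint : ∀ s ∈ I, ∀ j : ℕ, Integrable (fun x => |x| ^ j * Real.exp (x * s)) ν)
    (G : ℕ → ℝ → ℝ)
    (hG : ∀ ℓ y, G ℓ y = ∫ x, x ^ ℓ * Real.exp (x * T y) ∂ν)
    (hG0 : ∀ y ∈ 𝒴, 0 < G 0 y)
    (F : ℕ → ℝ → ℝ)
    (hF : ∀ ℓ y, F ℓ y = G ℓ y / G 0 y) :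
    ∀ y ∈ 𝒴,
      DifferentiableAt ℝ (G 0) y ∧
      T' y * F 1 y = deriv (G 0) y / G 0 y ∧
      deriv (G 0) y / G 0 y = deriv (fun z => Real.log (G 0 z)) y := by
  intro y hy
  have hH := aux_hasDerivAt_int ν I hIopen hint (hTI y hy)
  have hG0eq : G 0 = (fun t => ∫ x, Real.exp (x * t) ∂ν) ∘ T := by
    funext z; simp [hG 0 z]
  have hG0' : HasDerivAt (G 0) ((∫ x, x * Real.exp (x * T y) ∂ν) * T' y) y := by
    rw [hG0eq]; exact hH.comp y (hT y hy)
  have hG1 : G 1 y = ∫ x, x * Real.exp (x * T y) ∂ν := by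
    rw [hG 1 y]; simp [pow_one]
  have hderiv : deriv (G 0) y = G 1 y * T' y := by
    rw [hG0'.deriv, hG1]
  have hG0ne : G 0 y ≠ 0 := (hG0 y hy).ne'
  refine ⟨hG0'.differentiableAt, ?_, ?_⟩
  · rw [hF, hderiv]; field_simp
  · have hlog := hG0'.log hG0ne
    rw [hlog.deriv, hG0'.deriv]
end

section
/- (Cumulant-generating-function identity, Theorem 4.) In the univariate exponential-family setup of the context, let K(t,y) = log( G̃(t + T(y)) / G̃(T(y)) ) be the conditional cumulant generating function, where G̃(s) = ∫ e^{x s} dν(x), and let D^{(ℓ)} be the operator with D^{(0)}u = u and D^{(ℓ+1)}u = (1/T')·(D^{(ℓ)}u)'. Then for every integer ℓ ≥ 1, every y ∈ 𝒴 and every t with t + T(y) ∈ I: ∂^ℓ/∂t^ℓ K(t,y) = ( D^{(ℓ)} (K(t,·)) )(y) + ( D^{(ℓ−1)} F_1 )(y), where the operator D^{(ℓ)} acts on the y-variable. -/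
open MeasureTheory

open Filter Topology
open scoped ContDiff

namespace Stmt10Aux

lemma iter_deriv_shift (f : ℝ → ℝ) (c : ℝ) :
    ∀ j : ℕ, deriv^[j] (fun s => f (s + c)) = fun s => deriv^[j] f (s + c) := by
  intro j
  induction j with
  | zero => rfl
  | succ j ih =>
    funext x
    rw [Function.iterate_succ_apply', ih, deriv_comp_add_const, Function.iterate_succ_apply']

lemma iter_deriv_congr {f g : ℝ → ℝ} {t : ℝ} (h : f =ᶠ[nhds t] g) :
    ∀ j : ℕ, deriv^[j] f =ᶠ[nhds t] deriv^[j] g := by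
  intro j
  induction j with
  | zero => exact h
  | succ j ih =>
    rw [Function.iterate_succ_apply', Function.iterate_succ_apply']
    exact ih.deriv

lemma iter_deriv_sub {W : Set ℝ} (hW : IsOpen W) {f1 f2 : ℝ → ℝ}
    (h1 : ∀ j : ℕ, ∀ s ∈ W, DifferentiableAt ℝ (deriv^[j] f1) s)
    (h2 : ∀ j : ℕ, ∀ s ∈ W, DifferentiableAt ℝ (deriv^[j] f2) s) :
    ∀ j : ℕ, ∀ s ∈ W, deriv^[j] (fun x => f1 x - f2 x) s
      = deriv^[j] f1 s - deriv^[j] f2 s := by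
  intro j
  induction j with
  | zero => intro s _; rfl
  | succ j ih =>
    intro s hs
    have hev : deriv^[j] (fun x => f1 x - f2 x) =ᶠ[nhds s]
        fun x => deriv^[j] f1 x - deriv^[j] f2 x :=
      eventually_of_mem (hW.mem_nhds hs) ih
    have hd : HasDerivAt (fun x => deriv^[j] f1 x - deriv^[j] f2 x)
        (deriv (deriv^[j] f1) s - deriv (deriv^[j] f2) s) s :=
      (h1 j s hs).hasDerivAt.sub (h2 j s hs).hasDerivAt
    rw [Function.iterate_succ_apply', Function.iterate_succ_apply',
      Function.iterate_succ_apply', hev.deriv_eq, hd.deriv]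

lemma iter_deriv_sub_diff {W : Set ℝ} (hW : IsOpen W) {f1 f2 : ℝ → ℝ}
    (h1 : ∀ j : ℕ, ∀ s ∈ W, DifferentiableAt ℝ (deriv^[j] f1) s)
    (h2 : ∀ j : ℕ, ∀ s ∈ W, DifferentiableAt ℝ (deriv^[j] f2) s) :
    ∀ j : ℕ, ∀ s ∈ W, DifferentiableAt ℝ (deriv^[j] (fun x => f1 x - f2 x)) s := by
  intro j s hs
  have hev : (fun x => deriv^[j] f1 x - deriv^[j] f2 x) =ᶠ[nhds s]
      deriv^[j] (fun x => f1 x - f2 x) :=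
    eventually_of_mem (hW.mem_nhds hs) fun w hw => (iter_deriv_sub hW h1 h2 j w hw).symm
  exact ((h1 j s hs).sub (h2 j s hs)).congr_of_eventuallyEq hev.symm

lemma dop_comp {T T' : ℝ → ℝ} {U W : Set ℝ} (hU : IsOpen U)
    (hT : ∀ z ∈ U, HasDerivAt T (T' z) z) (hT' : ∀ z ∈ U, T' z ≠ 0)
    (hTW : ∀ z ∈ U, T z ∈ W)
    {g : ℝ → ℝ} (hg : ∀ j : ℕ, ∀ s ∈ W, DifferentiableAt ℝ (deriv^[j] g) s)
    {u : ℝ → ℝ} (hu : ∀ z ∈ U, u z = g (T z)) :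
    ∀ j : ℕ, ∀ z ∈ U, Dop T' j u z = deriv^[j] g (T z) := by
  intro j
  induction j with
  | zero => intro z hz; simpa [Dop] using hu z hz
  | succ j ih =>
    intro z hz
    have h1 : Dop T' j u =ᶠ[nhds z] fun w => deriv^[j] g (T w) :=
      eventually_of_mem (hU.mem_nhds hz) ih
    have h2 : HasDerivAt (fun w => deriv^[j] g (T w))
        (deriv (deriv^[j] g) (T z) * T' z) z :=
      ((hg j (T z) (hTW z hz)).hasDerivAt).comp z (hT z hz)
    show deriv (Dop T' j u) z / T' z = _
    rw [Function.iterate_succ_apply', h1.deriv_eq, h2.deriv,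
      mul_div_cancel_right₀ _ (hT' z hz)]

lemma meas_aux (ν : Measure ℝ) (ℓ : ℕ) (s : ℝ) :
    AEStronglyMeasurable (fun x : ℝ => x ^ ℓ * Real.exp (x * s)) ν :=
  ((continuous_pow ℓ).mul
    (Real.continuous_exp.comp (continuous_id.mul continuous_const))).aestronglyMeasurable

lemma int_aux (ν : Measure ℝ) {I : Set ℝ}
    (hint : ∀ s ∈ I, ∀ j : ℕ, Integrable (fun x => |x| ^ j * Real.exp (x * s)) ν)
    (ℓ : ℕ) {s : ℝ} (hs : s ∈ I) :
    Integrable (fun x : ℝ => x ^ ℓ * Real.exp (x * s)) ν := by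
  refine (hint s hs ℓ).mono' (meas_aux ν ℓ s) ?_
  filter_upwards with x
  rw [Real.norm_eq_abs, abs_mul, abs_pow, Real.abs_exp]

lemma hasDerivAt_M (ν : Measure ℝ) {I : Set ℝ} (hIopen : IsOpen I)
    (hint : ∀ s ∈ I, ∀ j : ℕ, Integrable (fun x => |x| ^ j * Real.exp (x * s)) ν)
    (ℓ : ℕ) {s : ℝ} (hs : s ∈ I) :
    HasDerivAt (fun s' => ∫ x, x ^ ℓ * Real.exp (x * s') ∂ν)
      (∫ x, x ^ (ℓ + 1) * Real.exp (x * s) ∂ν) s := by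
  obtain ⟨ε, εpos, hball⟩ := Metric.isOpen_iff.1 hIopen s hs
  have ha : s - ε / 2 ∈ I := by
    apply hball
    rw [Metric.mem_ball, Real.dist_eq, show s - ε / 2 - s = -(ε / 2) by ring, abs_neg,
      abs_of_pos (by linarith)]
    linarith
  have hb : s + ε / 2 ∈ I := by
    apply hball
    rw [Metric.mem_ball, Real.dist_eq, show s + ε / 2 - s = ε / 2 by ring,
      abs_of_pos (by linarith)]
    linarith
  have bint : Integrable
      (fun x : ℝ => |x| ^ (ℓ + 1) * (Real.exp (x * (s - ε / 2)) + Real.exp (x * (s + ε / 2)))) ν := by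
    have h := (hint _ ha (ℓ + 1)).add (hint _ hb (ℓ + 1))
    refine h.congr (Eventually.of_forall fun x => ?_); simp only [Pi.add_apply]; ring
  have key := hasDerivAt_integral_of_dominated_loc_of_deriv_le
    (F := fun s' (x : ℝ) => x ^ ℓ * Real.exp (x * s'))
    (F' := fun s' (x : ℝ) => x ^ (ℓ + 1) * Real.exp (x * s'))
    (μ := ν) (x₀ := s)
    (bound := fun x : ℝ => |x| ^ (ℓ + 1) * (Real.exp (x * (s - ε / 2)) + Real.exp (x * (s + ε / 2))))
    (Metric.ball_mem_nhds s (half_pos εpos))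
    (Eventually.of_forall fun s' => meas_aux ν ℓ s')
    (int_aux ν hint ℓ hs)
    (meas_aux ν (ℓ + 1) s)
    ?_ bint ?_
  · exact key.2
  · filter_upwards with x
    intro s' hs'
    rw [Metric.mem_ball, Real.dist_eq] at hs'
    have h1 := abs_lt.1 hs'
    rw [Real.norm_eq_abs, abs_mul, abs_pow, Real.abs_exp]
    have hkey : Real.exp (x * s') ≤ Real.exp (x * (s - ε / 2)) + Real.exp (x * (s + ε / 2)) := by
      rcases le_total 0 x with hx | hx
      · have : x * s' ≤ x * (s + ε / 2) := by nlinarith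
        exact (Real.exp_le_exp.2 this).trans (le_add_of_nonneg_left (Real.exp_pos _).le)
      · have : x * s' ≤ x * (s - ε / 2) := by nlinarith
        exact (Real.exp_le_exp.2 this).trans (le_add_of_nonneg_right (Real.exp_pos _).le)
    exact mul_le_mul_of_nonneg_left hkey (pow_nonneg (abs_nonneg x) _)
  · filter_upwards with x
    intro s' _
    have h := (((hasDerivAt_id s').const_mul x).exp).const_mul (x ^ ℓ)
    simp only [id] at h
    refine h.congr_deriv ?_
    ring

end Stmt10Aux

/-- Cumulant-generating-function identity (Theorem 4):
`∂^ℓ/∂t^ℓ K(t,y) = (D^{(ℓ)} K(t,·))(y) + (D^{(ℓ−1)} F_1)(y)`. -/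
theorem stmt_10
    (ν : Measure ℝ) [IsFiniteMeasure ν] (hν : ν ≠ 0)
    (𝒴 : Set ℝ) (h𝒴open : IsOpen 𝒴) (h𝒴conn : 𝒴.OrdConnected)
    (T T' : ℝ → ℝ)
    (hT : ∀ y ∈ 𝒴, HasDerivAt T (T' y) y)
    (hT' : ∀ y ∈ 𝒴, T' y ≠ 0)
    (I : Set ℝ) (hIopen : IsOpen I) (hIconn : I.OrdConnected)
    (hTI : ∀ y ∈ 𝒴, T y ∈ I)
    (hint : ∀ s ∈ I, ∀ j : ℕ, Integrable (fun x => |x| ^ j * Real.exp (x * s)) ν)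
    (G : ℕ → ℝ → ℝ)
    (hG : ∀ ℓ y, G ℓ y = ∫ x, x ^ ℓ * Real.exp (x * T y) ∂ν)
    (hG0 : ∀ y ∈ 𝒴, 0 < G 0 y)
    (F : ℕ → ℝ → ℝ)
    (hF : ∀ ℓ y, F ℓ y = G ℓ y / G 0 y)
    (Gt : ℝ → ℝ)
    (hGt : ∀ s, Gt s = ∫ x, Real.exp (x * s) ∂ν)
    (K : ℝ → ℝ → ℝ)
    (hK : ∀ t y, K t y = Real.log (Gt (t + T y) / Gt (T y))) :
    ∀ ℓ : ℕ, 1 ≤ ℓ → ∀ y ∈ 𝒴, ∀ t : ℝ, t + T y ∈ I →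
      iteratedDeriv ℓ (fun s => K s y) t
        = Dop T' ℓ (fun z => K t z) y + Dop T' (ℓ - 1) (F 1) y := by
  intro ℓ hℓ y hy t hty
  obtain ⟨m, rfl⟩ : ∃ m, ℓ = m + 1 := ⟨ℓ - 1, (Nat.succ_pred_eq_of_pos hℓ).symm⟩
  have hνne : NeZero ν := ⟨hν⟩
  set M : ℕ → ℝ → ℝ := fun j s => ∫ x, x ^ j * Real.exp (x * s) ∂ν with hMdef
  have hMdiff : ∀ (j : ℕ), ∀ s ∈ I, HasDerivAt (M j) (M (j + 1) s) s := by
    intro j s hs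
    simp only [hMdef]
    exact Stmt10Aux.hasDerivAt_M ν hIopen hint j hs
  have hM0pos : ∀ s ∈ I, 0 < M 0 s := by
    intro s hs
    have hi : Integrable (fun x => Real.exp (x * s)) ν := by
      simpa using Stmt10Aux.int_aux ν hint 0 hs
    have h := integral_exp_pos (μ := ν) (f := fun x : ℝ => x * s) hi
    simp only [hMdef]
    simpa using h
  have hMC : ∀ (n : ℕ) (j : ℕ), ContDiffOn ℝ n (M j) I := by
    intro n
    induction n with
    | zero =>
      intro j
      exact contDiffOn_zero.2 fun s hs =>
        ((hMdiff j s hs).differentiableAt.continuousAt).continuousWithinAt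
    | succ n ih =>
      intro j
      have hcast : ((n + 1 : ℕ) : WithTop ℕ∞) = (n : WithTop ℕ∞) + 1 := by push_cast; rfl
      rw [hcast, contDiffOn_succ_iff_deriv_of_isOpen hIopen]
      refine ⟨fun s hs => (hMdiff j s hs).differentiableAt.differentiableWithinAt, ?_, ?_⟩
      · intro h; exact absurd h (by simp)
      · exact (ih (j + 1)).congr fun s hs => (hMdiff j s hs).deriv
  set L : ℝ → ℝ := fun s => Real.log (M 0 s) with hLdef
  have hLC : ContDiffOn ℝ ∞ L I := by
    rw [hLdef]
    exact (contDiffOn_infty.2 fun n => hMC n 0).log fun s hs => (hM0pos s hs).ne'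
  have hLiter : ∀ j : ℕ, ContDiffOn ℝ ∞ (deriv^[j] L) I := by
    intro j
    induction j with
    | zero => exact hLC
    | succ j ih =>
      rw [Function.iterate_succ_apply']
      exact ((contDiffOn_infty_iff_deriv_of_isOpen hIopen).1 ih).2
  have hL : ∀ j : ℕ, ∀ s ∈ I, DifferentiableAt ℝ (deriv^[j] L) s := fun j s hs =>
    (((contDiffOn_infty_iff_deriv_of_isOpen hIopen).1 (hLiter j)).1).differentiableAt
      (hIopen.mem_nhds hs)
  have hLder : ∀ s ∈ I, HasDerivAt L (M 1 s / M 0 s) s := fun s hs =>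
    (hMdiff 0 s hs).log (hM0pos s hs).ne'
  have hGtM : ∀ s, Gt s = M 0 s := by
    intro s
    rw [hGt s]
    simp [hMdef]
  have hopenPre : ∀ V : Set ℝ, IsOpen V → IsOpen {z | z ∈ 𝒴 ∧ T z ∈ V} := by
    intro V hV
    rw [isOpen_iff_mem_nhds]
    rintro z ⟨hz, hzV⟩
    exact Filter.inter_mem (h𝒴open.mem_nhds hz)
      ((hT z hz).continuousAt.preimage_mem_nhds (hV.mem_nhds hzV))
  set W : Set ℝ := I ∩ (fun s => s + t) ⁻¹' I with hWdef
  have hWopen : IsOpen W := hIopen.inter (hIopen.preimage (continuous_id.add continuous_const))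
  have hTyW : T y ∈ W := ⟨hTI y hy, by simp only [Set.mem_preimage]; rwa [add_comm]⟩
  set U : Set ℝ := {z | z ∈ 𝒴 ∧ T z ∈ W} with hUdef
  have hUopen : IsOpen U := hopenPre W hWopen
  have hyU : y ∈ U := ⟨hy, hTyW⟩
  set f1 : ℝ → ℝ := fun s => L (s + t) with hf1def
  have h1 : ∀ j : ℕ, ∀ s ∈ W, DifferentiableAt ℝ (deriv^[j] f1) s := by
    intro j s hs
    have hst : s + t ∈ I := hs.2
    rw [hf1def, Stmt10Aux.iter_deriv_shift L t j]
    exact ((hL j (s + t) hst).hasDerivAt.comp_add_const s t).differentiableAt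
  have h2 : ∀ j : ℕ, ∀ s ∈ W, DifferentiableAt ℝ (deriv^[j] L) s := fun j s hs => hL j s hs.1
  have hg : ∀ j : ℕ, ∀ s ∈ W, DifferentiableAt ℝ (deriv^[j] (fun x => f1 x - L x)) s :=
    Stmt10Aux.iter_deriv_sub_diff hWopen h1 h2
  have hu : ∀ z ∈ U, K t z = (fun x => f1 x - L x) (T z) := by
    rintro z ⟨hz, hzI, hztI⟩
    have hztI' : t + T z ∈ I := by
      have : T z + t ∈ I := hztI
      rwa [add_comm] at this
    rw [hK t z, hGtM, hGtM, Real.log_div (hM0pos _ hztI').ne' (hM0pos _ hzI).ne']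
    simp only [hf1def, hLdef]
    rw [add_comm (T z) t]
  have hKpart := Stmt10Aux.dop_comp hUopen (fun z hz => hT z hz.1) (fun z hz => hT' z hz.1)
    (fun z hz => hz.2) hg hu (m + 1) y hyU
  have hsub := Stmt10Aux.iter_deriv_sub hWopen h1 h2 (m + 1) (T y) hTyW
  set U2 : Set ℝ := {z | z ∈ 𝒴 ∧ T z ∈ I} with hU2def
  have hU2open : IsOpen U2 := hopenPre I hIopen
  have hyU2 : y ∈ U2 := ⟨hy, hTI y hy⟩
  have hg2 : ∀ j : ℕ, ∀ s ∈ I, DifferentiableAt ℝ (deriv^[j] (deriv L)) s := by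
    intro j s hs
    rw [← Function.iterate_succ_apply]
    exact hL (j + 1) s hs
  have hu2 : ∀ z ∈ U2, F 1 z = deriv L (T z) := by
    rintro z ⟨hz, hzI⟩
    rw [hF 1 z, hG 1 z, hG 0 z, (hLder (T z) hzI).deriv]
  have hFpart := Stmt10Aux.dop_comp hU2open (fun z hz => hT z hz.1) (fun z hz => hT' z hz.1)
    (fun z hz => hz.2) hg2 hu2 m y hyU2
  have hA : iteratedDeriv (m + 1) (fun s => K s y) t = deriv^[m + 1] L (t + T y) := by
    have hmem : {s : ℝ | s + T y ∈ I} ∈ nhds t := by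
      have hc : ContinuousAt (fun s : ℝ => s + T y) t :=
        (continuous_id.add continuous_const).continuousAt
      exact hc.preimage_mem_nhds (hIopen.mem_nhds hty)
    have hev : (fun s => K s y) =ᶠ[nhds t] fun s => L (s + T y) - L (T y) := by
      filter_upwards [hmem] with s hsI
      rw [hK s y, hGtM, hGtM, Real.log_div (hM0pos _ hsI).ne' (hM0pos _ (hTI y hy)).ne']
    rw [iteratedDeriv_eq_iterate, (Stmt10Aux.iter_deriv_congr hev (m + 1)).eq_of_nhds,
      Function.iterate_succ_apply]
    have h2' : deriv (fun s => L (s + T y) - L (T y)) = deriv (fun s => L (s + T y)) :=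
      funext fun x => deriv_sub_const _
    rw [h2', ← Function.iterate_succ_apply, Stmt10Aux.iter_deriv_shift L (T y) (m + 1)]
  rw [hA, hKpart, Nat.add_sub_cancel, hFpart, hsub, hf1def,
    congrFun (Stmt10Aux.iter_deriv_shift L t (m + 1)) (T y), ← Function.iterate_succ_apply,
    add_comm (T y) t]
  ring
end

section
/- (Cumulants as derivatives of the conditional expectation, Proposition 3.) In the univariate exponential-family setup of the context, let κ_ℓ(y) = ∂^ℓ/∂t^ℓ K(t,y) |_{t=0} be the ℓ-th conditional cumulant of X given Y = y, and let D^{(ℓ)} be the operator with D^{(0)}u = u and D^{(ℓ+1)}u = (1/T')·(D^{(ℓ)}u)'. Then for every integer ℓ ≥ 1 and every y ∈ 𝒴: κ_ℓ(y) = ( D^{(ℓ−1)} F_1 )(y); in particular, the ℓ-th conditional cumulant is obtained by (ℓ−1)-fold application of (1/T')·d/dy to the conditional expectation E[X|Y=y]. -/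
open MeasureTheory

private lemma iteratedDeriv_congr_nhds' {f g : ℝ → ℝ} {x : ℝ} (h : f =ᶠ[nhds x] g) (n : ℕ) :
    iteratedDeriv n f =ᶠ[nhds x] iteratedDeriv n g := by
  induction n with
  | zero => simpa [iteratedDeriv_zero] using h
  | succ n ih => simpa only [iteratedDeriv_succ] using ih.deriv

/-- Cumulants as derivatives of the conditional expectation (Proposition 3):
`κ_ℓ(y) = (D^{(ℓ−1)} F_1)(y)`. -/
theorem stmt_12
    (ν : Measure ℝ) [IsFiniteMeasure ν] (hν : ν ≠ 0)
    (𝒴 : Set ℝ) (h𝒴open : IsOpen 𝒴) (h𝒴conn : 𝒴.OrdConnected)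
    (T T' : ℝ → ℝ)
    (hT : ∀ y ∈ 𝒴, HasDerivAt T (T' y) y)
    (hT' : ∀ y ∈ 𝒴, T' y ≠ 0)
    (I : Set ℝ) (hIopen : IsOpen I) (hIconn : I.OrdConnected)
    (hTI : ∀ y ∈ 𝒴, T y ∈ I)
    (hint : ∀ s ∈ I, ∀ j : ℕ, Integrable (fun x => |x| ^ j * Real.exp (x * s)) ν)
    (G : ℕ → ℝ → ℝ)
    (hG : ∀ ℓ y, G ℓ y = ∫ x, x ^ ℓ * Real.exp (x * T y) ∂ν)
    (hG0 : ∀ y ∈ 𝒴, 0 < G 0 y)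
    (F : ℕ → ℝ → ℝ)
    (hF : ∀ ℓ y, F ℓ y = G ℓ y / G 0 y)
    (Gt : ℝ → ℝ)
    (hGt : ∀ s, Gt s = ∫ x, Real.exp (x * s) ∂ν)
    (K : ℝ → ℝ → ℝ)
    (hK : ∀ t y, K t y = Real.log (Gt (t + T y) / Gt (T y)))
    (κ : ℕ → ℝ → ℝ)
    (hκ : ∀ ℓ y, κ ℓ y = iteratedDeriv ℓ (fun t => K t y) 0) :
    ∀ ℓ : ℕ, 1 ≤ ℓ → ∀ y ∈ 𝒴,
      κ ℓ y = Dop T' (ℓ - 1) (F 1) y := by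
  classical
  set P : ℕ → ℝ → ℝ := fun j s => ∫ x, x ^ j * Real.exp (x * s) ∂ν with hP
  -- integrability
  have hPint : ∀ s ∈ I, ∀ j : ℕ, Integrable (fun x => x ^ j * Real.exp (x * s)) ν := by
    intro s hs j
    refine (hint s hs j).mono' ?_ ?_
    · exact (by fun_prop : Continuous fun x : ℝ => x ^ j * Real.exp (x * s)).aestronglyMeasurable
    · refine Filter.Eventually.of_forall fun x => le_of_eq ?_
      rw [Real.norm_eq_abs, abs_mul, abs_pow, Real.abs_exp]
  -- positivity
  have hPpos : ∀ s ∈ I, 0 < P 0 s := by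
    intro s hs
    have hi : Integrable (fun x => Real.exp (x * s)) ν := by simpa using hPint s hs 0
    have h1 : (0:ℝ) < ∫ x, Real.exp (x * s) ∂ν := by
      rw [integral_pos_iff_support_of_nonneg (fun x => (Real.exp_pos _).le) hi]
      have h2 : Function.support (fun x : ℝ => Real.exp (x * s)) = Set.univ :=
        Set.eq_univ_of_forall fun x => (Real.exp_pos _).ne'
      rw [h2]
      exact Measure.measure_univ_pos.mpr hν
    have h3 : P 0 s = ∫ x, Real.exp (x * s) ∂ν := by simp [hP]
    rwa [h3]
  -- differentiation under the integral
  have hPderiv : ∀ (j : ℕ), ∀ s ∈ I, HasDerivAt (P j) (P (j+1) s) s := by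
    intro j s hs
    obtain ⟨ε, hε, hball⟩ : ∃ ε > 0, Metric.closedBall s ε ⊆ I :=
      Metric.nhds_basis_closedBall.mem_iff.mp (hIopen.mem_nhds hs)
    have hmem : ∀ u : ℝ, |u - s| ≤ ε → u ∈ I := by
      intro u hu
      exact hball (by rwa [Metric.mem_closedBall, Real.dist_eq])
    have hsub : s - ε ∈ I := hmem _ (by rw [show s - ε - s = -ε by ring, abs_neg, abs_of_nonneg hε.le])
    have hsup : s + ε ∈ I := hmem _ (by rw [show s + ε - s = ε by ring, abs_of_nonneg hε.le])
    have key := hasDerivAt_integral_of_dominated_loc_of_deriv_le (μ := ν) (x₀ := s) (s := Metric.ball s ε)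
      (F := fun u a => a ^ j * Real.exp (a * u))
      (F' := fun u a => a ^ (j+1) * Real.exp (a * u))
      (bound := fun a => |a| ^ (j+1) * (Real.exp (a * (s - ε)) + Real.exp (a * (s + ε))))
      (Metric.ball_mem_nhds s hε)
      (Filter.Eventually.of_forall fun u =>
        (by fun_prop : Continuous fun a : ℝ => a ^ j * Real.exp (a * u)).aestronglyMeasurable)
      (hPint s hs j)
      (by fun_prop : Continuous fun a : ℝ => a ^ (j+1) * Real.exp (a * s)).aestronglyMeasurable
      (Filter.Eventually.of_forall ?_)
      ?_
      (Filter.Eventually.of_forall ?_)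
    · exact key.2
    · -- bound
      intro a u hu
      have hu' : s - ε ≤ u ∧ u ≤ s + ε := by
        rw [Metric.mem_ball, Real.dist_eq] at hu
        constructor <;> [linarith [abs_lt.mp hu]; linarith [abs_lt.mp hu]]
      have hexp : Real.exp (a * u) ≤ Real.exp (a * (s - ε)) + Real.exp (a * (s + ε)) := by
        rcases le_total 0 a with ha | ha
        · have : a * u ≤ a * (s + ε) := mul_le_mul_of_nonneg_left hu'.2 ha
          exact le_add_of_nonneg_left (Real.exp_pos _).le |>.trans' (Real.exp_le_exp.mpr this)
        · have : a * u ≤ a * (s - ε) := mul_le_mul_of_nonpos_left hu'.1 ha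
          exact le_add_of_nonneg_right (Real.exp_pos _).le |>.trans' (Real.exp_le_exp.mpr this)
      calc ‖a ^ (j+1) * Real.exp (a * u)‖ = |a| ^ (j+1) * Real.exp (a * u) := by
            rw [Real.norm_eq_abs, abs_mul, abs_pow, Real.abs_exp]
        _ ≤ |a| ^ (j+1) * (Real.exp (a * (s - ε)) + Real.exp (a * (s + ε))) :=
            mul_le_mul_of_nonneg_left hexp (pow_nonneg (abs_nonneg _) _)
    · -- bound integrable
      simpa only [mul_add, Pi.add_def] using (hint _ hsub (j+1)).add (hint _ hsup (j+1))
    · -- pointwise derivative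
      intro a u hu
      have h1 : HasDerivAt (fun v : ℝ => a * v) (a * 1) u := (hasDerivAt_id u).const_mul a
      have h2 := (h1.exp).const_mul (a ^ j)
      rw [show a ^ (j+1) * Real.exp (a * u) = a ^ j * (Real.exp (a * u) * (a * 1)) by ring]
      exact h2
  set L : ℝ → ℝ := fun s => Real.log (P 0 s) with hL
  have hLderiv : ∀ s ∈ I, HasDerivAt L (P 1 s / P 0 s) s := by
    intro s hs
    have := (Real.hasDerivAt_log (hPpos s hs).ne').comp s (hPderiv 0 s hs)
    rw [div_eq_inv_mul]; exact this
  -- smoothness of P and L on I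
  have hPcd : ∀ (n j : ℕ), ContDiffOn ℝ n (P j) I := by
    intro n
    induction n with
    | zero =>
      intro j
      rw [Nat.cast_zero, contDiffOn_zero]
      exact fun s hs => ((hPderiv j s hs).differentiableAt.continuousAt).continuousWithinAt
    | succ n ih =>
      intro j
      rw [Nat.cast_succ, contDiffOn_succ_iff_deriv_of_isOpen hIopen]
      refine ⟨fun s hs => (hPderiv j s hs).differentiableAt.differentiableWithinAt,
        by simp, (ih (j+1)).congr fun s hs => (hPderiv j s hs).deriv⟩
  have hLcd : ∀ n : ℕ, ContDiffOn ℝ n L I :=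
    fun n => (hPcd n 0).log fun s hs => (hPpos s hs).ne'
  -- differentiability of iterated derivatives of L on I
  have hWithin : ∀ m : ℕ, Set.EqOn (iteratedDerivWithin m L I) (iteratedDeriv m L) I := by
    intro m s hs
    rw [iteratedDerivWithin_eq_iteratedFDerivWithin, iteratedDeriv_eq_iteratedFDeriv,
      iteratedFDerivWithin_of_isOpen m hIopen hs]
  have hLd : ∀ (m : ℕ), ∀ s ∈ I, DifferentiableAt ℝ (iteratedDeriv m L) s := by
    intro m s hs
    have h1 : DifferentiableWithinAt ℝ (iteratedDerivWithin m L I) I s :=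
      (hLcd (m+1)).differentiableOn_iteratedDerivWithin
        (by exact_mod_cast lt_add_one m) hIopen.uniqueDiffOn s hs
    have h2 : DifferentiableAt ℝ (iteratedDerivWithin m L I) s :=
      h1.differentiableAt (hIopen.mem_nhds hs)
    have hev : iteratedDerivWithin m L I =ᶠ[nhds s] iteratedDeriv m L :=
      Filter.eventuallyEq_of_mem (hIopen.mem_nhds hs) (hWithin m)
    exact (hev.differentiableAt_iff).mp h2
  have hHasD : ∀ (m : ℕ), ∀ s ∈ I, HasDerivAt (iteratedDeriv m L) (iteratedDeriv (m+1) L s) s := by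
    intro m s hs
    have := (hLd m s hs).hasDerivAt
    rwa [← iteratedDeriv_succ] at this
  have hGtP : ∀ u, Gt u = P 0 u := by
    intro u; rw [hGt u]; simp [hP]
  -- κ in terms of iterated derivatives of L
  have hκL : ∀ (m : ℕ), ∀ y ∈ 𝒴, κ (m+1) y = iteratedDeriv (m+1) L (T y) := by
    intro m y hy
    set a := T y with ha
    have haI : a ∈ I := hTI y hy
    have hU : {t : ℝ | t + a ∈ I} ∈ nhds (0:ℝ) := by
      have : IsOpen {t : ℝ | t + a ∈ I} := hIopen.preimage (continuous_id.add continuous_const)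
      exact this.mem_nhds (by simpa using haI)
    have hev : (fun t => K t y) =ᶠ[nhds (0:ℝ)] fun t => L (t + a) - L a := by
      refine Filter.eventuallyEq_of_mem hU fun t ht => ?_
      have htI : t + a ∈ I := ht
      rw [hK, hGtP, hGtP, ← ha,
        Real.log_div (hPpos _ htI).ne' (hPpos _ haI).ne']
    rw [hκ]
    rw [(iteratedDeriv_congr_nhds' hev (m+1)).eq_of_nhds]
    have e1 : iteratedDeriv (m+1) (fun t => L (t + a) - L a) 0
        = iteratedDeriv (m+1) (fun t => L (t + a)) 0 := by
      rw [iteratedDeriv_succ', iteratedDeriv_succ']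
      congr 1
      funext t
      exact deriv_sub_const _
    rw [e1, iteratedDeriv_comp_add_const (m+1) L a]
    simp
  -- the Dop side
  have hDop : ∀ (m : ℕ), ∀ y ∈ 𝒴, Dop T' m (F 1) y = iteratedDeriv (m+1) L (T y) := by
    intro m
    induction m with
    | zero =>
      intro y hy
      have : F 1 y = P 1 (T y) / P 0 (T y) := by rw [hF, hG, hG]
      rw [show Dop T' 0 (F 1) y = F 1 y from rfl, this, iteratedDeriv_one,
        (hLderiv (T y) (hTI y hy)).deriv]
    | succ m ih =>
      intro y hy
      have hev : Dop T' m (F 1) =ᶠ[nhds y] fun z => iteratedDeriv (m+1) L (T z) :=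
        Filter.eventuallyEq_of_mem (h𝒴open.mem_nhds hy) fun z hz => ih z hz
      have hcomp : HasDerivAt (fun z => iteratedDeriv (m+1) L (T z))
          (iteratedDeriv (m+2) L (T y) * T' y) y :=
        (hHasD (m+1) (T y) (hTI y hy)).comp y (hT y hy)
      have : Dop T' (m+1) (F 1) y = deriv (Dop T' m (F 1)) y / T' y := rfl
      rw [this, hev.deriv_eq, hcomp.deriv, mul_div_cancel_right₀ _ (hT' y hy)]
  -- conclusion
  intro ℓ hℓ y hy
  obtain ⟨m, rfl⟩ : ∃ m, ℓ = m + 1 := ⟨ℓ - 1, (Nat.succ_pred_eq_of_pos hℓ).symm⟩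
  rw [Nat.add_sub_cancel, hκL m y hy, hDop m y hy]
end

section
/- (Cumulant recursion.) In the univariate exponential-family setup of the context, let κ_ℓ(y) = ∂^ℓ/∂t^ℓ K(t,y) |_{t=0} be the ℓ-th conditional cumulant of X given Y = y. Then for every integer ℓ ≥ 1, κ_ℓ is differentiable on 𝒴 and for every y ∈ 𝒴: κ_{ℓ+1}(y) = (1/T'(y)) · κ_ℓ'(y). -/
open MeasureTheory

/-- auxiliary: derivative under the integral sign for `∫ x^n e^{xs} dν`. -/
lemma aux13_hasDeriv (ν : Measure ℝ) [IsFiniteMeasure ν]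
    (I : Set ℝ) (hIopen : IsOpen I)
    (hint : ∀ s ∈ I, ∀ j : ℕ, Integrable (fun x => |x| ^ j * Real.exp (x * s)) ν)
    (n : ℕ) (s : ℝ) (hs : s ∈ I) :
    HasDerivAt (fun u => ∫ x, x ^ n * Real.exp (x * u) ∂ν)
      (∫ x, x ^ (n + 1) * Real.exp (x * s) ∂ν) s := by
  obtain ⟨ε', hε', hball⟩ := Metric.isOpen_iff.1 hIopen s hs
  set ε := ε' / 2 with hεdef
  have hε : 0 < ε := by positivity
  have hmem : ∀ t : ℝ, |t - s| ≤ ε → t ∈ I := by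
    intro t ht
    apply hball
    rw [Metric.mem_ball, Real.dist_eq]
    calc |t - s| ≤ ε := ht
    _ < ε' := by simp [hεdef]; linarith
  have hsm : s - ε ∈ I := hmem _ (by rw [show s - ε - s = -ε by ring, abs_neg, abs_of_pos hε])
  have hsp : s + ε ∈ I := hmem _ (by rw [show s + ε - s = ε by ring, abs_of_pos hε])
  have cont : ∀ (m : ℕ) (t : ℝ), Continuous fun x : ℝ => x ^ m * Real.exp (x * t) :=
    fun m t => (continuous_pow m).mul ((continuous_id.mul continuous_const).rexp)
  have meas : ∀ (m : ℕ) (t : ℝ),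
      AEStronglyMeasurable (fun x : ℝ => x ^ m * Real.exp (x * t)) ν :=
    fun m t => (cont m t).aestronglyMeasurable
  have hInt : ∀ (m : ℕ) (t : ℝ), t ∈ I → Integrable (fun x : ℝ => x ^ m * Real.exp (x * t)) ν := by
    intro m t ht
    refine (hint t ht m).mono (meas m t) (Filter.Eventually.of_forall fun x => ?_)
    have h1 : ‖x ^ m * Real.exp (x * t)‖ = |x| ^ m * Real.exp (x * t) := by
      rw [norm_mul, norm_pow, Real.norm_eq_abs, Real.norm_eq_abs,
        Real.abs_exp]
    rw [h1, Real.norm_eq_abs]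
    exact le_abs_self _
  have key := hasDerivAt_integral_of_dominated_loc_of_deriv_le (μ := ν)
    (F := fun t x => x ^ n * Real.exp (x * t))
    (F' := fun t x => x ^ (n + 1) * Real.exp (x * t))
    (bound := fun x => |x| ^ (n + 1) * (Real.exp (x * (s - ε)) + Real.exp (x * (s + ε))))
    (x₀ := s) (Metric.ball_mem_nhds s hε)
    (Filter.Eventually.of_forall fun t => meas n t)
    (hInt n s hs)
    (meas (n + 1) s)
    ?_ ?_ ?_
  · exact key.2
  · refine Filter.Eventually.of_forall fun x => fun t ht => ?_
    rw [Metric.mem_ball, Real.dist_eq] at ht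
    have h1 : ‖x ^ (n + 1) * Real.exp (x * t)‖ = |x| ^ (n + 1) * Real.exp (x * t) := by
      rw [norm_mul, norm_pow, Real.norm_eq_abs, Real.norm_eq_abs, Real.abs_exp]
    rw [h1]
    have hx : Real.exp (x * t) ≤ Real.exp (x * (s - ε)) + Real.exp (x * (s + ε)) := by
      rcases le_or_gt 0 x with hx0 | hx0
      · have : x * t ≤ x * (s + ε) := by nlinarith [abs_lt.1 ht]
        have := Real.exp_le_exp.2 this
        linarith [Real.exp_pos (x * (s - ε))]
      · have : x * t ≤ x * (s - ε) := by nlinarith [abs_lt.1 ht]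
        have := Real.exp_le_exp.2 this
        linarith [Real.exp_pos (x * (s + ε))]
    exact mul_le_mul_of_nonneg_left hx (by positivity)
  · have := (hint (s - ε) hsm (n + 1)).add (hint (s + ε) hsp (n + 1))
    refine this.congr (Filter.Eventually.of_forall fun x => ?_)
    simp only [Pi.add_apply]
    ring
  · refine Filter.Eventually.of_forall fun x => fun t _ => ?_
    have h1 : HasDerivAt (fun u : ℝ => x * u) x t := by
      simpa using (hasDerivAt_id t).const_mul x
    have h2 : HasDerivAt (fun u : ℝ => Real.exp (x * u)) (Real.exp (x * t) * x) t :=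
      (Real.hasDerivAt_exp (x * t)).comp t h1
    have h3 := h2.const_mul (x ^ n)
    convert h3 using 1
    show x ^ (n + 1) * Real.exp (x * t) = _
    rw [pow_succ]; ring
    rfl

/-- auxiliary: on an open set, `iteratedDerivWithin` agrees with `iteratedDeriv`. -/
lemma aux13_iterEq {s : Set ℝ} (hs : IsOpen s) (f : ℝ → ℝ) (n : ℕ) :
    Set.EqOn (iteratedDerivWithin n f s) (iteratedDeriv n f) s := by
  induction n with
  | zero => intro x hx; simp [iteratedDerivWithin_zero, iteratedDeriv_zero]
  | succ n IH =>
    intro x hx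
    rw [iteratedDerivWithin_succ, iteratedDeriv_succ,
      derivWithin_congr IH (IH hx), derivWithin_of_isOpen hs hx]

/-- auxiliary: differentiability of iterated derivatives of a smooth function on an open set. -/
lemma aux13_iterDiff {s : Set ℝ} (hs : IsOpen s) {f : ℝ → ℝ}
    (hf : ContDiffOn ℝ (⊤ : ℕ∞) f s) (n : ℕ) {x : ℝ} (hx : x ∈ s) :
    DifferentiableAt ℝ (iteratedDeriv n f) x := by
  have hd : DifferentiableOn ℝ (iteratedDerivWithin n f s) s :=
    hf.differentiableOn_iteratedDerivWithin (by exact_mod_cast ENat.coe_lt_top n)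
      hs.uniqueDiffOn
  have hDA : DifferentiableAt ℝ (iteratedDerivWithin n f s) x :=
    (hd x hx).differentiableAt (hs.mem_nhds hx)
  refine hDA.congr_of_eventuallyEq ?_
  filter_upwards [hs.mem_nhds hx] with y hy using (aux13_iterEq hs f n hy).symm

/-- auxiliary: smoothness of the parametric integrals. -/
lemma aux13_smooth (ν : Measure ℝ) [IsFiniteMeasure ν]
    (I : Set ℝ) (hIopen : IsOpen I)
    (hint : ∀ s ∈ I, ∀ j : ℕ, Integrable (fun x => |x| ^ j * Real.exp (x * s)) ν)
    (k : ℕ) (n : ℕ) :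
    ContDiffOn ℝ k (fun u => ∫ x, x ^ n * Real.exp (x * u) ∂ν) I := by
  induction k generalizing n with
  | zero =>
    rw [Nat.cast_zero, contDiffOn_zero]
    exact fun s hs =>
      ((aux13_hasDeriv ν I hIopen hint n s hs).differentiableAt.continuousAt).continuousWithinAt
  | succ k IH =>
    rw [show ((k + 1 : ℕ) : WithTop ℕ∞) = (k : WithTop ℕ∞) + 1 by push_cast; rfl,
      contDiffOn_succ_iff_deriv_of_isOpen hIopen]
    refine ⟨fun s hs =>
      ((aux13_hasDeriv ν I hIopen hint n s hs).differentiableAt).differentiableWithinAt,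
      ?_, ?_⟩
    · intro h; simp at h
    · exact (IH (n + 1)).congr fun s hs => (aux13_hasDeriv ν I hIopen hint n s hs).deriv

/-- Cumulant recursion: `κ_{ℓ+1}(y) = (1/T'(y)) κ_ℓ'(y)` for the conditional
cumulants of `X` given `Y = y` in a univariate exponential family. -/
theorem stmt_13
    (ν : Measure ℝ) [IsFiniteMeasure ν] (hν : ν ≠ 0)
    (𝒴 : Set ℝ) (h𝒴open : IsOpen 𝒴) (h𝒴conn : 𝒴.OrdConnected)
    (T T' : ℝ → ℝ)
    (hT : ∀ y ∈ 𝒴, HasDerivAt T (T' y) y)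
    (hT' : ∀ y ∈ 𝒴, T' y ≠ 0)
    (I : Set ℝ) (hIopen : IsOpen I) (hIconn : I.OrdConnected)
    (hTI : ∀ y ∈ 𝒴, T y ∈ I)
    (hint : ∀ s ∈ I, ∀ j : ℕ, Integrable (fun x => |x| ^ j * Real.exp (x * s)) ν)
    (G : ℕ → ℝ → ℝ)
    (hG : ∀ ℓ y, G ℓ y = ∫ x, x ^ ℓ * Real.exp (x * T y) ∂ν)
    (hG0 : ∀ y ∈ 𝒴, 0 < G 0 y)
    (Gt : ℝ → ℝ)
    (hGt : ∀ s, Gt s = ∫ x, Real.exp (x * s) ∂ν)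
    (K : ℝ → ℝ → ℝ)
    (hK : ∀ t y, K t y = Real.log (Gt (t + T y) / Gt (T y)))
    (κ : ℕ → ℝ → ℝ)
    (hκ : ∀ ℓ y, κ ℓ y = iteratedDeriv ℓ (fun t => K t y) 0) :
    ∀ ℓ : ℕ, 1 ≤ ℓ → ∀ y ∈ 𝒴,
      DifferentiableAt ℝ (κ ℓ) y ∧
      κ (ℓ + 1) y = (1 / T' y) * deriv (κ ℓ) y := by
  set L : ℝ → ℝ := fun s => Real.log (Gt s) with hL
  -- positivity of Gt on I
  have hGtpos : ∀ s ∈ I, 0 < Gt s := by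
    intro s hs
    rw [hGt]
    have hint0 : Integrable (fun x => Real.exp (x * s)) ν := by
      have := hint s hs 0; simpa using this
    rw [integral_pos_iff_support_of_nonneg (fun x => (Real.exp_pos _).le) hint0]
    have hsupp : (Function.support fun x => Real.exp (x * s)) = Set.univ := by
      ext x; simp [Function.mem_support, (Real.exp_pos _).ne']
    rw [hsupp]
    simpa [Measure.measure_univ_pos] using hν
  -- smoothness of Gt, L on I
  have hGtF : Gt = fun u => ∫ x, x ^ 0 * Real.exp (x * u) ∂ν := by
    funext u; rw [hGt]; simp
  have hGsm : ContDiffOn ℝ (⊤ : ℕ∞) Gt I := by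
    rw [hGtF]
    exact contDiffOn_infty.2 fun k => aux13_smooth ν I hIopen hint k 0
  have hLsm : ContDiffOn ℝ (⊤ : ℕ∞) L I := by
    refine Real.contDiffOn_log.comp hGsm fun s hs => ?_
    simpa using (hGtpos s hs).ne'
  have hLdiff : ∀ n : ℕ, ∀ s ∈ I, DifferentiableAt ℝ (iteratedDeriv n L) s :=
    fun n s hs => aux13_iterDiff hIopen hLsm n hs
  -- the cumulants expressed through L
  have hκL : ∀ ℓ : ℕ, ∀ y ∈ 𝒴, κ (ℓ + 1) y = iteratedDeriv (ℓ + 1) L (T y) := by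
    intro ℓ y hy
    have hTy := hTI y hy
    obtain ⟨δ, hδ, hball⟩ := Metric.isOpen_iff.1 hIopen (T y) hTy
    have hEq : (fun t => K t y) =ᶠ[nhds 0] fun t => L (t + T y) - L (T y) := by
      filter_upwards [Metric.ball_mem_nhds (0 : ℝ) hδ] with t ht
      have h1 : t + T y ∈ I :=
        hball (by simpa [Metric.mem_ball, Real.dist_eq] using ht)
      rw [hK, Real.log_div (hGtpos _ h1).ne' (hGtpos _ hTy).ne']
    rw [hκ, hEq.iteratedDeriv_eq, iteratedDeriv_succ']
    have hder : deriv (fun t => L (t + T y) - L (T y)) = fun t => deriv L (t + T y) := by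
      funext t
      rw [deriv_sub_const, deriv_comp_add_const]
    rw [hder]
    calc iteratedDeriv ℓ (fun t => deriv L (t + T y)) 0
        = iteratedDeriv ℓ (deriv L) (0 + T y) := by rw [iteratedDeriv_comp_add_const]
      _ = iteratedDeriv (ℓ + 1) L (T y) := by rw [zero_add, ← iteratedDeriv_succ']
  -- main statement
  intro ℓ hℓ y hy
  obtain ⟨m, rfl⟩ : ∃ m, ℓ = m + 1 := ⟨ℓ - 1, (Nat.succ_pred_eq_of_pos hℓ).symm⟩
  have hTy := hTI y hy
  have hEq : κ (m + 1) =ᶠ[nhds y] fun z => iteratedDeriv (m + 1) L (T z) := by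
    filter_upwards [h𝒴open.mem_nhds hy] with z hz using hκL m z hz
  have hg : HasDerivAt (iteratedDeriv (m + 1) L) (iteratedDeriv (m + 2) L (T y)) (T y) := by
    have h := (hLdiff (m + 1) (T y) hTy).hasDerivAt
    rwa [← iteratedDeriv_succ] at h
  have hcomp : HasDerivAt (fun z => iteratedDeriv (m + 1) L (T z))
      (iteratedDeriv (m + 2) L (T y) * T' y) y := hg.comp y (hT y hy)
  have hκd : HasDerivAt (κ (m + 1)) (iteratedDeriv (m + 2) L (T y) * T' y) y :=
    hcomp.congr_of_eventuallyEq hEq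
  refine ⟨hκd.differentiableAt, ?_⟩
  rw [hκd.deriv, hκL (m + 1) y hy]
  field_simp [hT' y hy]
end

section
/- (Cumulants from the marginal of Y.) In the univariate exponential-family setup of the context, let κ_ℓ(y) = ∂^ℓ/∂t^ℓ K(t,y) |_{t=0} be the ℓ-th conditional cumulant of X given Y = y, and let D^{(ℓ)} be the operator with D^{(0)}u = u and D^{(ℓ+1)}u = (1/T')·(D^{(ℓ)}u)'. Then for every integer ℓ ≥ 1 and every y ∈ 𝒴: κ_ℓ(y) = ( D^{(ℓ)} (log ∘ G_0) )(y). (Since G_0(y) = f_Y(y)/h(y), the conditional cumulants depend on the joint distribution of (X,Y) only through the marginal of Y.) -/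
open MeasureTheory
open scoped ContDiff

section Aux

open Real Filter Metric

/-- On an open set, `iteratedDerivWithin` agrees with `iteratedDeriv`. -/
private lemma eqOn_iteratedDerivWithin {f : ℝ → ℝ} {s : Set ℝ} (hs : IsOpen s) (n : ℕ) :
    Set.EqOn (iteratedDerivWithin n f s) (iteratedDeriv n f) s := by
  induction n with
  | zero => intro x hx; simp [iteratedDerivWithin_zero, iteratedDeriv_zero]
  | succ n ih =>
    intro x hx
    rw [iteratedDerivWithin_succ, derivWithin_of_isOpen hs hx,
      iteratedDeriv_succ]
    exact Filter.EventuallyEq.deriv_eq (Filter.eventuallyEq_of_mem (hs.mem_nhds hx) ih)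

/-- Differentiation under the integral sign for `s ↦ ∫ x^j e^{x s} dν`. -/
private lemma keyHasDerivAt (ν : Measure ℝ) (I : Set ℝ) (hIopen : IsOpen I)
    (hint : ∀ s ∈ I, ∀ j : ℕ, Integrable (fun x => |x| ^ j * Real.exp (x * s)) ν)
    (j : ℕ) {s : ℝ} (hs : s ∈ I) :
    HasDerivAt (fun u => ∫ x, x ^ j * Real.exp (x * u) ∂ν)
      (∫ x, x ^ (j + 1) * Real.exp (x * s) ∂ν) s := by
  obtain ⟨ε, hε, hball⟩ := Metric.isOpen_iff.mp hIopen s hs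
  have hmem : ∀ t : ℝ, |t - s| < ε → t ∈ I := fun t ht =>
    hball (by simpa [Metric.mem_ball, Real.dist_eq] using ht)
  set ε' := ε / 2 with hε'def
  have hε'pos : 0 < ε' := by positivity
  have hsl : s - ε' ∈ I := hmem _ (by rw [abs_of_nonpos (by linarith)]; simp [hε'def]; linarith)
  have hsr : s + ε' ∈ I := hmem _ (by rw [abs_of_nonneg (by linarith)]; simp [hε'def]; linarith)
  have hcont : ∀ (k : ℕ) (t : ℝ), Continuous fun x : ℝ => x ^ k * Real.exp (x * t) :=
    fun k t => (continuous_pow k).mul (Real.continuous_exp.comp (continuous_id.mul continuous_const))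
  have hnorm : ∀ (k : ℕ) (t x : ℝ), ‖x ^ k * Real.exp (x * t)‖ = |x| ^ k * Real.exp (x * t) := by
    intro k t x
    rw [Real.norm_eq_abs, abs_mul, abs_pow, abs_of_pos (Real.exp_pos _)]
  have hintc : ∀ (k : ℕ) (t : ℝ), t ∈ I → Integrable (fun x => x ^ k * Real.exp (x * t)) ν := by
    intro k t ht
    refine (hint t ht k).mono' ((hcont k t).aestronglyMeasurable) ?_
    exact Eventually.of_forall fun x => le_of_eq (hnorm k t x)
  have key := hasDerivAt_integral_of_dominated_loc_of_deriv_le (μ := ν) (x₀ := s)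
    (F := fun t x => x ^ j * Real.exp (x * t))
    (F' := fun t x => x ^ (j + 1) * Real.exp (x * t))
    (bound := fun x => |x| ^ (j + 1) * Real.exp (x * (s - ε')) +
      |x| ^ (j + 1) * Real.exp (x * (s + ε')))
    (Metric.ball_mem_nhds s hε'pos)
    (Eventually.of_forall fun t => (hcont j t).aestronglyMeasurable)
    (hintc j s hs)
    ((hcont (j + 1) s).aestronglyMeasurable)
    ?_ (((hint _ hsl (j + 1))).add (hint _ hsr (j + 1))) ?_
  · exact key.2
  · refine Eventually.of_forall fun x => fun t ht => ?_
    have hts : |t - s| < ε' := by simpa [Metric.mem_ball, Real.dist_eq] using ht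
    have h1 : t ≤ s + ε' := by
      have := (abs_lt.mp hts).2; linarith
    have h2 : s - ε' ≤ t := by
      have := (abs_lt.mp hts).1; linarith
    have hexp : Real.exp (x * t) ≤ Real.exp (x * (s - ε')) + Real.exp (x * (s + ε')) := by
      rcases le_total 0 x with hx | hx
      · have : x * t ≤ x * (s + ε') := mul_le_mul_of_nonneg_left h1 hx
        have := Real.exp_le_exp.mpr this
        have hpos := (Real.exp_pos (x * (s - ε'))).le
        linarith
      · have : x * t ≤ x * (s - ε') := mul_le_mul_of_nonpos_left h2 hx
        have := Real.exp_le_exp.mpr this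
        have hpos := (Real.exp_pos (x * (s + ε'))).le
        linarith
    calc ‖x ^ (j + 1) * Real.exp (x * t)‖ = |x| ^ (j + 1) * Real.exp (x * t) := hnorm _ _ _
      _ ≤ |x| ^ (j + 1) * (Real.exp (x * (s - ε')) + Real.exp (x * (s + ε'))) :=
          mul_le_mul_of_nonneg_left hexp (pow_nonneg (abs_nonneg x) _)
      _ = |x| ^ (j + 1) * Real.exp (x * (s - ε')) + |x| ^ (j + 1) * Real.exp (x * (s + ε')) := by
          ring
  · refine Eventually.of_forall fun x => fun t ht => ?_
    have h1 : HasDerivAt (fun u : ℝ => x * u) (x * 1) t := (hasDerivAt_id t).const_mul x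
    have h2 := h1.exp
    have h3 := h2.const_mul (x ^ j)
    exact h3.congr_deriv (by ring)

end Aux

/-- Cumulants from the marginal of `Y`: `κ_ℓ(y) = (D^{(ℓ)} (log ∘ G_0))(y)`;
since `G_0 = f_Y/h`, the conditional cumulants depend on the joint
distribution only through the marginal of `Y`. -/
theorem stmt_14
    (ν : Measure ℝ) [IsFiniteMeasure ν] (hν : ν ≠ 0)
    (𝒴 : Set ℝ) (h𝒴open : IsOpen 𝒴) (h𝒴conn : 𝒴.OrdConnected)
    (T T' : ℝ → ℝ)
    (hT : ∀ y ∈ 𝒴, HasDerivAt T (T' y) y)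
    (hT' : ∀ y ∈ 𝒴, T' y ≠ 0)
    (I : Set ℝ) (hIopen : IsOpen I) (hIconn : I.OrdConnected)
    (hTI : ∀ y ∈ 𝒴, T y ∈ I)
    (hint : ∀ s ∈ I, ∀ j : ℕ, Integrable (fun x => |x| ^ j * Real.exp (x * s)) ν)
    (G : ℕ → ℝ → ℝ)
    (hG : ∀ ℓ y, G ℓ y = ∫ x, x ^ ℓ * Real.exp (x * T y) ∂ν)
    (hG0 : ∀ y ∈ 𝒴, 0 < G 0 y)
    (Gt : ℝ → ℝ)
    (hGt : ∀ s, Gt s = ∫ x, Real.exp (x * s) ∂ν)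
    (K : ℝ → ℝ → ℝ)
    (hK : ∀ t y, K t y = Real.log (Gt (t + T y) / Gt (T y)))
    (κ : ℕ → ℝ → ℝ)
    (hκ : ∀ ℓ y, κ ℓ y = iteratedDeriv ℓ (fun t => K t y) 0) :
    ∀ ℓ : ℕ, 1 ≤ ℓ → ∀ y ∈ 𝒴,
      κ ℓ y = Dop T' ℓ (fun z => Real.log (G 0 z)) y := by
  classical
  -- the family of moment integrals
  set F : ℕ → ℝ → ℝ := fun j s => ∫ x, x ^ j * Real.exp (x * s) ∂ν with hF
  have hGtF : Gt = F 0 := by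
    funext s
    rw [hGt]
    simp [hF]
  -- derivative under the integral sign
  have hDF : ∀ (j : ℕ) (s : ℝ), s ∈ I → HasDerivAt (F j) (F (j + 1) s) s :=
    fun j s hs => keyHasDerivAt ν I hIopen hint j hs
  -- smoothness of each F j on I
  have hCD : ∀ (m : ℕ) (j : ℕ), ContDiffOn ℝ m (F j) I := by
    intro m
    induction m with
    | zero =>
      intro j
      exact contDiffOn_zero.mpr fun s hs =>
        ((hDF j s hs).differentiableAt.continuousAt).continuousWithinAt
    | succ m ih =>
      intro j
      have hcast : ((m + 1 : ℕ) : WithTop ℕ∞) = (m : WithTop ℕ∞) + 1 := by push_cast; rfl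
      rw [hcast]
      refine (contDiffOn_succ_iff_deriv_of_isOpen hIopen).mpr ⟨?_, ?_, ?_⟩
      · exact fun s hs => (hDF j s hs).differentiableAt.differentiableWithinAt
      · intro h; simp at h
      · exact (ih (j + 1)).congr fun s hs => (hDF j s hs).deriv
  have hCDt : ContDiffOn ℝ ∞ Gt I := by
    rw [hGtF]
    exact contDiffOn_infty.mpr fun n => hCD n 0
  -- positivity of Gt
  have hpos : ∀ s ∈ I, 0 < Gt s := by
    intro s hs
    rw [hGt]
    have hintexp : Integrable (fun x => Real.exp (x * s)) ν := by
      have := hint s hs 0; simpa using this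
    rw [integral_pos_iff_support_of_nonneg (fun x => (Real.exp_pos _).le) hintexp]
    have hsupp : Function.support (fun x => Real.exp (x * s)) = Set.univ :=
      Set.eq_univ_iff_forall.mpr fun x => (Real.exp_pos _).ne'
    rw [hsupp]
    exact Measure.measure_univ_pos.mpr hν
  -- the log of Gt
  set L : ℝ → ℝ := fun s => Real.log (Gt s) with hL
  have hCDL : ContDiffOn ℝ ∞ L I := hCDt.log fun s hs => (hpos s hs).ne'
  -- iterated derivatives of L are differentiable on I
  have hdiff : ∀ (n : ℕ), ∀ s ∈ I, DifferentiableAt ℝ (iteratedDeriv n L) s := by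
    intro n s hs
    have h1 : DifferentiableOn ℝ (iteratedDerivWithin n L I) I :=
      hCDL.differentiableOn_iteratedDerivWithin (by exact_mod_cast WithTop.coe_lt_top n)
        hIopen.uniqueDiffOn
    have h2 : DifferentiableAt ℝ (iteratedDerivWithin n L I) s :=
      (h1 s hs).differentiableAt (hIopen.mem_nhds hs)
    exact (Filter.eventuallyEq_of_mem (hIopen.mem_nhds hs)
      (eqOn_iteratedDerivWithin hIopen n)).differentiableAt_iff.mp h2
  have hDA : ∀ (n : ℕ), ∀ s ∈ I, HasDerivAt (iteratedDeriv n L) (iteratedDeriv (n + 1) L s) s := by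
    intro n s hs
    rw [iteratedDeriv_succ]
    exact (hdiff n s hs).hasDerivAt
  -- the Dop side
  have hDop : ∀ (ℓ : ℕ), ∀ y ∈ 𝒴, Dop T' ℓ (fun z => L (T z)) y = iteratedDeriv ℓ L (T y) := by
    intro ℓ
    induction ℓ with
    | zero => intro y hy; simp [Dop, iteratedDeriv_zero]
    | succ ℓ ih =>
      intro y hy
      show deriv (Dop T' ℓ (fun z => L (T z))) y / T' y = iteratedDeriv (ℓ + 1) L (T y)
      have h1 : deriv (Dop T' ℓ (fun z => L (T z))) y
          = deriv (fun z => iteratedDeriv ℓ L (T z)) y :=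
        Filter.EventuallyEq.deriv_eq (Filter.eventuallyEq_of_mem (h𝒴open.mem_nhds hy) ih)
      have h2 : HasDerivAt (fun z => iteratedDeriv ℓ L (T z))
          (iteratedDeriv (ℓ + 1) L (T y) * T' y) y :=
        (hDA ℓ (T y) (hTI y hy)).comp y (hT y hy)
      rw [h1, h2.deriv, mul_div_assoc, div_self (hT' y hy), mul_one]
  have hGL : (fun z => Real.log (G 0 z)) = fun z => L (T z) := by
    funext z
    simp only [hL, hG, hGt, pow_zero, one_mul]
  -- main computation
  rintro ℓ hℓ y hy
  obtain ⟨m, rfl⟩ : ∃ m, ℓ = m + 1 := ⟨ℓ - 1, by omega⟩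
  have hU : IsOpen ((fun t : ℝ => t + T y) ⁻¹' I) :=
    hIopen.preimage (continuous_id.add continuous_const)
  have h0U : (0 : ℝ) ∈ (fun t : ℝ => t + T y) ⁻¹' I := by
    simp only [Set.mem_preimage, zero_add]
    exact hTI y hy
  have hEq : (fun t => K t y) =ᶠ[nhds 0] (fun t => L (t + T y) - L (T y)) := by
    refine Filter.eventuallyEq_of_mem (hU.mem_nhds h0U) fun t ht => ?_
    have htI : t + T y ∈ I := ht
    rw [hK, Real.log_div (hpos _ htI).ne' (hpos _ (hTI y hy)).ne']
  have hderiv_sub : deriv (fun t => L (t + T y) - L (T y)) = deriv (fun t => L (t + T y)) :=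
    funext fun t => deriv_sub_const _
  calc κ (m + 1) y = iteratedDeriv (m + 1) (fun t => K t y) 0 := hκ _ _
    _ = iteratedDeriv (m + 1) (fun t => L (t + T y) - L (T y)) 0 :=
        Filter.EventuallyEq.iteratedDeriv_eq _ hEq
    _ = iteratedDeriv m (deriv (fun t => L (t + T y) - L (T y))) 0 := by
        rw [iteratedDeriv_succ']
    _ = iteratedDeriv m (deriv (fun t => L (t + T y))) 0 := by rw [hderiv_sub]
    _ = iteratedDeriv (m + 1) (fun t => L (t + T y)) 0 := by rw [← iteratedDeriv_succ']
    _ = iteratedDeriv (m + 1) L (T y) := by rw [iteratedDeriv_comp_add_const]; simp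
    _ = Dop T' (m + 1) (fun z => L (T z)) y := (hDop (m + 1) y hy).symm
    _ = Dop T' (m + 1) (fun z => Real.log (G 0 z)) y := by rw [hGL]
end
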